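/- arXiv:2405.01343 — 5 statements merged into one kernel-verified Lean document; each statement's English description precedes it below -/
import Mathlib

section
/- Suppose P is strong Feller, i.e. P f is continuous on M for every bounded measurable f : M → ℝ. Then for every integer n ≥ 2 the induced operator P^n : L^∞(M,μ) → L^∞(M,μ) is compact (the image of the unit ball of L^∞(M,μ) under P^n is relatively compact in the essential-supremum norm). -/
/-!
Write `P f(x) = ∫ f(y) k(x,y) dμ(y)`, where `k(x,·)` is the density of `e^{φ(x)} κ(x,·)`.
Splitting `k = min(k, m) + (k - m)⁺` gives, for `|f| ≤ 1`,
`P² f(x) = ∫ f(z) w_m(x,z) dμ(z) + P(S_m f)(x)` with `w_m(x,z) = P(min(k(·,z), m))(x)` and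
`|S_m f| ≤ r_m := ∫ (k(·,z) - m)⁺ dμ(z)`. By the strong Feller property each `w_m(·,z)` is
continuous and bounded by `m ‖P 1‖`, so `x ↦ w_m(x,·)` is continuous into `L¹(μ)` by dominated
convergence; and the continuous functions `P r_m` decrease pointwise to `0`, hence uniformly by
Dini's theorem. Thus `{P² f : |f| ≤ 1}` is equicontinuous, Arzelà–Ascoli makes `P²` compact on
`L^∞`, and so is `P^n = P^(n-2) P²`.
-/

open MeasureTheory ProbabilityTheory Filter Topology

namespace QEM

noncomputable section

variable {M : Type*} [MetricSpace M] [CompactSpace M] [MeasurableSpace M] [BorelSpace M]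

/-- The weighted Koopman operator on real-valued functions:
`P f (x) = e^{φ(x)} ∫ f(y) κ(x,dy)`. -/
def PR (φ : M → ℝ) (κ : Kernel M M) (f : M → ℝ) : M → ℝ :=
  fun x => Real.exp (φ x) * ∫ y, f y ∂(κ x)

/-- The weighted Koopman operator on complex-valued functions
(`P f := P(Re f) + i P(Im f)`, equivalently with the complex Bochner integral). -/
def PC (φ : M → ℝ) (κ : Kernel M M) (f : M → ℂ) : M → ℂ :=
  fun x => (Real.exp (φ x) : ℂ) * ∫ y, f y ∂(κ x)

/-- Bounded measurable real-valued functions. -/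
def BddMeas (f : M → ℝ) : Prop := Measurable f ∧ ∃ C : ℝ, ∀ x, |f x| ≤ C

/-- Bounded measurable complex-valued functions. -/
def BddMeasC (f : M → ℂ) : Prop := Measurable f ∧ ∃ C : ℝ, ∀ x, ‖f x‖ ≤ C

/-- The operator `P_g f := P (1_{g>0} · f)`. -/
def Pg (φ : M → ℝ) (κ : Kernel M M) (g : M → ℝ) : (M → ℝ) → (M → ℝ) :=
  fun f => PR φ κ (Set.indicator {x | 0 < g x} f)

/-- Complex version of `P_g`. -/
def PgC (φ : M → ℝ) (κ : Kernel M M) (g : M → ℝ) : (M → ℂ) → (M → ℂ) :=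
  fun f => PC φ κ (Set.indicator {x | 0 < g x} f)

/-- The indicator function of `{g > 0}`. -/
def oneG (g : M → ℝ) : M → ℝ := Set.indicator {x | 0 < g x} (fun _ => (1 : ℝ))

/-- The normalized restriction `μ̃` of `μ` to `{g > 0}`, i.e.
`μ̃(A) = μ(A ∩ {g>0}) / μ({g>0})`. -/
def mtilde (μ : Measure M) (g : M → ℝ) : Measure M :=
  (μ {x | 0 < g x})⁻¹ • μ.restrict {x | 0 < g x}

/-- The root-of-unity phase `e^{2πi j/k}`. -/
def rootU (k j : ℕ) : ℂ := Complex.exp (2 * (Real.pi : ℂ) * Complex.I * (j : ℂ) / (k : ℂ))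

/-- Basic standing setup: `μ` is a fully supported Borel probability measure, `κ` a
sub-Markov kernel with `κ(x,·) ≪ μ` for all `x`, and `φ` a (bounded) continuous function. -/
structure Setup (μ : Measure M) (κ : Kernel M M) (φ : M → ℝ) : Prop where
  prob : IsProbabilityMeasure μ
  fullSupp : ∀ U : Set M, IsOpen U → U.Nonempty → 0 < μ U
  subMarkov : ∀ x, κ x Set.univ ≤ 1
  ac : ∀ x, κ x ≪ μ
  contφ : Continuous φ

/-- Hypothesis (HA): (i) `P` is strong Feller; (ii) `lam > 0` equals the spectral radius of the
induced operator `T` on `L^∞(M,μ;ℂ)` (where `T` agrees a.e. with the pointwise operator `P` on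
bounded measurable representatives); (iii) the eigenspace of `P` at `lam` in `L^∞(M,μ)` is
one-dimensional, spanned by a continuous nonnegative `g ≢ 0` with `P g = lam·g` and
`∫ g dμ = μ {g>0}`; (iv) `P^*μ = lam·μ`. -/
structure HypHA (μ : Measure M) (κ : Kernel M M) (φ : M → ℝ)
    (T : Lp ℂ ⊤ μ →L[ℂ] Lp ℂ ⊤ μ) (lam : ℝ) (g : M → ℝ) : Prop where
  setup : Setup μ κ φ
  strongFeller : ∀ f : M → ℝ, BddMeas f → Continuous (PR φ κ f)
  lam_pos : 0 < lam
  Tcompat : ∀ f : M → ℂ, BddMeasC f → ∀ F : Lp ℂ ⊤ μ, ⇑F =ᵐ[μ] f →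
      ⇑(T F) =ᵐ[μ] PC φ κ f
  specRad : spectralRadius ℂ T = ENNReal.ofReal lam
  g_cont : Continuous g
  g_nonneg : ∀ x, 0 ≤ g x
  g_ne : g ≠ 0
  g_eigen : PR φ κ g = fun x => lam * g x
  g_int : ∫ x, g x ∂μ = (μ {x | 0 < g x}).toReal
  eigen_dim : ∀ f : M → ℝ, BddMeas f → PR φ κ f =ᵐ[μ] (fun x => lam * f x) →
      ∃ c : ℝ, f =ᵐ[μ] fun x => c * g x
  Pstar : ∀ f : M → ℝ, BddMeas f → ∫ x, PR φ κ f x ∂μ = lam * ∫ x, f x ∂μ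

/-- Membership in the point peripheral spectrum `σ_per(P)`:
`|α| = lam` and `P f = α f` for some nonzero `f ∈ L^∞(M,μ;ℂ)`. -/
def PerSpec (μ : Measure M) (κ : Kernel M M) (φ : M → ℝ) (lam : ℝ) (α : ℂ) : Prop :=
  ‖α‖ = lam ∧ ∃ f : M → ℂ, BddMeasC f ∧ ¬ (f =ᵐ[μ] 0) ∧ PC φ κ f =ᵐ[μ] fun x => α * f x

/-- `σ_per(P) = {lam·e^{2πi j/k} : j = 0, …, k-1}`. -/
def PerSpecEq (μ : Measure M) (κ : Kernel M M) (φ : M → ℝ) (lam : ℝ) (k : ℕ) : Prop :=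
  ∀ α : ℂ, PerSpec μ κ φ lam α ↔ ∃ j : ℕ, j < k ∧ α = (lam : ℂ) * rootU k j

/-- A family of `k` linearly independent, nonnegative, continuous functions with pairwise
disjoint supports, spanning `ker(P^k - lam^k)` in `L^∞(M,μ;ℂ)`, each of integral `μ {g>0}`. -/
structure PreFamily (μ : Measure M) (κ : Kernel M M) (φ : M → ℝ) (lam : ℝ) (g : M → ℝ)
    (k : ℕ) (gi : Fin k → M → ℝ) : Prop where
  cont : ∀ i, Continuous (gi i)
  nonneg : ∀ i x, 0 ≤ gi i x
  indep : LinearIndependent ℝ gi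
  span_ker : ∀ f : M → ℂ, BddMeasC f →
      (((PC φ κ)^[k] f) =ᵐ[μ] fun x => (lam : ℂ) ^ k * f x) ↔
        ∃ c : Fin k → ℂ, f =ᵐ[μ] fun x => ∑ i, c i * (gi i x : ℂ)
  integral : ∀ i, ∫ x, gi i x ∂μ = (μ {x | 0 < g x}).toReal
  disj : ∀ i j, i ≠ j → ∀ x, ¬ (0 < gi i x ∧ 0 < gi j x)

/-- The cyclic family hypothesis: nonnegative continuous `g_0, …, g_{k-1}` supported in `{g>0}`
with pairwise disjoint supports, spanning `ker(P^k - lam^k)` in `L^∞(M,μ;ℂ)`, with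
`∫ g_i dμ = μ {g>0}`, `P g_i = lam·g_{i-1 (mod k)}` and `g = (1/k) ∑ g_i`. -/
structure CyclicFamily (μ : Measure M) (κ : Kernel M M) (φ : M → ℝ) (lam : ℝ) (g : M → ℝ)
    (k : ℕ) [NeZero k] (gi : Fin k → M → ℝ) : Prop where
  cont : ∀ i, Continuous (gi i)
  nonneg : ∀ i x, 0 ≤ gi i x
  supported : ∀ i x, 0 < gi i x → 0 < g x
  disj : ∀ i j, i ≠ j → ∀ x, ¬ (0 < gi i x ∧ 0 < gi j x)
  span_ker : ∀ f : M → ℂ, BddMeasC f →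
      (((PC φ κ)^[k] f) =ᵐ[μ] fun x => (lam : ℂ) ^ k * f x) ↔
        ∃ c : Fin k → ℂ, f =ᵐ[μ] fun x => ∑ i, c i * (gi i x : ℂ)
  integral : ∀ i, ∫ x, gi i x ∂μ = (μ {x | 0 < g x}).toReal
  cycle : ∀ i : Fin k, PR φ κ (gi i) = fun x => lam * gi (i - 1) x
  avg : g = fun x => (1 / (k : ℝ)) * ∑ i, gi i x

/-- The spectral decomposition hypothesis: a closed `P_g`-invariant subspace `V` of
`L^∞({g>0},μ;ℂ)` with `L^∞({g>0},μ;ℂ) = span{g_0,…,g_{k-1}} ⊕ V` and such that the spectral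
radius of `P_g` restricted to `V` is `< lam` (expressed through a geometric bound on the
iterates, via Gelfand's formula). -/
structure SpecDecomp (μ : Measure M) (κ : Kernel M M) (φ : M → ℝ) (lam : ℝ) (g : M → ℝ)
    (k : ℕ) (gi : Fin k → M → ℝ) (V : Submodule ℂ (M → ℂ)) : Prop where
  meas : ∀ v ∈ V, Measurable v
  bdd : ∀ v ∈ V, ∃ C : ℝ, ∀ x, ‖v x‖ ≤ C
  supp : ∀ v ∈ V, ∀ x, ¬ 0 < g x → v x = 0
  invariant : ∀ v ∈ V, PgC φ κ g v ∈ V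
  closed : ∀ (u : ℕ → M → ℂ) (f : M → ℂ), (∀ n, u n ∈ V) → Measurable f →
      (∃ C : ℝ, ∀ x, ‖f x‖ ≤ C) → (∀ x, ¬ 0 < g x → f x = 0) →
      Tendsto (fun n => eLpNorm (u n - f) ⊤ μ) atTop (nhds 0) → f ∈ V
  decomp : ∀ f : M → ℂ, BddMeasC f → (∀ x, ¬ 0 < g x → f x = 0) →
      ∃ c : Fin k → ℂ, ∃ v ∈ V, f = fun x => (∑ i, c i * (gi i x : ℂ)) + v x
  unique : ∀ c : Fin k → ℂ, (fun x => ∑ i, c i * (gi i x : ℂ)) ∈ V → c = 0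
  gap : ∃ r : ℝ, 0 ≤ r ∧ r < lam ∧ ∃ C : ℝ, ∀ n : ℕ, ∀ v ∈ V,
      eLpNorm ((PgC φ κ g)^[n] v) ⊤ μ ≤ ENNReal.ofReal (C * r ^ n) * eLpNorm v ⊤ μ

/-- The operator `P^{k+1} - lam^{k+1}` on complex-valued functions. -/
def Qop (φ : M → ℝ) (κ : Kernel M M) (lam : ℝ) (k : ℕ) : (M → ℂ) → (M → ℂ) :=
  fun h x => (PC φ κ)^[k + 1] h x - (lam : ℂ) ^ (k + 1) * h x

open scoped ENNReal BoundedContinuousFunction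

section Truncation

variable {X : Type*} {k : X → X → ℝ} {m : ℝ}

def truncKernel (k : X → X → ℝ) (m : ℝ) : X → X → ℝ := fun y z => min (k y z) m

def tailKernel (k : X → X → ℝ) (m : ℝ) : X → X → ℝ := fun y z => max (k y z - m) 0

lemma abs_truncKernel_le (hk : ∀ x y, 0 ≤ k x y) (hm : 0 ≤ m) (y z : X) :
    |truncKernel k m y z| ≤ m :=
  (abs_of_nonneg (le_min (hk y z) hm)).trans_le (min_le_right _ _)

lemma truncKernel_add_tailKernel (y z : X) : truncKernel k m y z + tailKernel k m y z = k y z := by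
  rcases le_total (k y z) m with h | h
  · simp [truncKernel, tailKernel, min_eq_left h, max_eq_right (sub_nonpos.2 h)]
  · simp [truncKernel, tailKernel, min_eq_right h, max_eq_left (sub_nonneg.2 h)]

end Truncation

section IntegralOperator

variable {X : Type*} [MeasurableSpace X] {μ : Measure X}

def intOp (μ : Measure X) (k : X → X → ℝ) (f : X → ℝ) : X → ℝ :=
  fun x => ∫ y, f y * k x y ∂μ

def compDensity (μ : Measure X) (k k' : X → X → ℝ) : X → X → ℝ :=
  fun x z => intOp μ k (fun y => k' y z) x

structure IsBoundedDensity (μ : Measure X) (k : X → X → ℝ) (C : ℝ) : Prop where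
  measurable : Measurable (Function.uncurry k)
  nonneg : ∀ x y, 0 ≤ k x y
  integrable : ∀ x, Integrable (k x) μ
  integral_le : ∀ x, ∫ y, k x y ∂μ ≤ C

def tailMass (μ : Measure X) (k : X → X → ℝ) (m : ℝ) : X → ℝ := intOp μ (tailKernel k m) 1

def IsStrongFeller [TopologicalSpace X] (μ : Measure X) (k : X → X → ℝ) : Prop :=
  ∀ f : X → ℝ, BddMeas f → Continuous (intOp μ k f)

lemma measurable_intOp [SFinite μ] {k : X → X → ℝ} (hk : Measurable (Function.uncurry k))
    {f : X → ℝ} (hf : Measurable f) : Measurable (intOp μ k f) :=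
  ((hf.comp measurable_snd).mul hk).stronglyMeasurable.integral_prod_right'.measurable

lemma abs_intOp_le_intOp {k : X → X → ℝ} {f b : X → ℝ} {x : X} (hk : ∀ y, 0 ≤ k x y)
    (hb : Integrable (fun y => b y * k x y) μ) (hfb : ∀ y, |f y| ≤ b y) :
    |intOp μ k f x| ≤ intOp μ k b x := by
  refine norm_integral_le_of_norm_le (f := fun y => f y * k x y) hb (ae_of_all _ fun y => ?_)
  rw [Real.norm_eq_abs, abs_mul, abs_of_nonneg (hk y)]
  exact mul_le_mul_of_nonneg_right (hfb y) (hk y)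

lemma abs_intOp_sub_intOp_le {k : X → X → ℝ} {f : X → ℝ} (hf : Measurable f)
    (hf1 : ∀ z, |f z| ≤ 1) {x x₀ : X} (hx : Integrable (k x) μ) (hx₀ : Integrable (k x₀) μ) :
    |intOp μ k f x - intOp μ k f x₀| ≤ ∫ z, |k x z - k x₀ z| ∂μ := by
  rw [intOp, intOp, ← integral_sub (hx.bdd_mul hf.aestronglyMeasurable (ae_of_all _ hf1))
    (hx₀.bdd_mul hf.aestronglyMeasurable (ae_of_all _ hf1))]
  refine norm_integral_le_of_norm_le (f := fun z => f z * k x z - f z * k x₀ z)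
    (hx.sub hx₀).abs (ae_of_all _ fun z => ?_)
  rw [← mul_sub, Real.norm_eq_abs, abs_mul]
  exact mul_le_of_le_one_left (abs_nonneg _) (hf1 z)

namespace IsBoundedDensity

variable {k : X → X → ℝ} {C m : ℝ} (hk : IsBoundedDensity μ k C)
include hk

lemma measurable_apply (x : X) : Measurable (k x) :=
  hk.measurable.comp measurable_prodMk_left

lemma integrable_mul {f : X → ℝ} (hf : Measurable f) {c : ℝ} (hfc : ∀ y, |f y| ≤ c) (x : X) :
    Integrable (fun y => f y * k x y) μ :=
  (hk.integrable x).bdd_mul hf.aestronglyMeasurable (ae_of_all _ hfc)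

lemma abs_intOp_le {f : X → ℝ} {c : ℝ} (hfc : ∀ y, |f y| ≤ c) (x : X) :
    |intOp μ k f x| ≤ c * C := by
  have hc : 0 ≤ c := (abs_nonneg _).trans (hfc x)
  calc |intOp μ k f x| ≤ intOp μ k (fun _ => c) x :=
        abs_intOp_le_intOp (hk.nonneg x)
          (hk.integrable_mul measurable_const (fun _ => (abs_of_nonneg hc).le) x) hfc
    _ = c * ∫ y, k x y ∂μ := integral_const_mul c _
    _ ≤ c * C := mul_le_mul_of_nonneg_left (hk.integral_le x) hc

lemma bddMeas_intOp [SFinite μ] {f : X → ℝ} (hf : BddMeas f) : BddMeas (intOp μ k f) := by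
  obtain ⟨hf, c, hfc⟩ := hf
  exact ⟨measurable_intOp hk.measurable hf, c * C, hk.abs_intOp_le hfc⟩

lemma intOp_add {f g : X → ℝ} (hf : BddMeas f) (hg : BddMeas g) :
    intOp μ k (f + g) = intOp μ k f + intOp μ k g := by
  obtain ⟨hf, c, hfc⟩ := hf
  obtain ⟨hg, c', hgc⟩ := hg
  funext x
  simp only [intOp, Pi.add_apply, add_mul]
  exact integral_add (hk.integrable_mul hf hfc x) (hk.integrable_mul hg hgc x)

lemma of_le {k' : X → X → ℝ} (hk' : Measurable (Function.uncurry k'))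
    (hk'0 : ∀ x y, 0 ≤ k' x y) (hk'k : ∀ x y, k' x y ≤ k x y) : IsBoundedDensity μ k' C := by
  have hint x : Integrable (k' x) μ :=
    (hk.integrable x).mono' (hk'.comp measurable_prodMk_left).aestronglyMeasurable
      (ae_of_all _ fun y => (abs_of_nonneg (hk'0 x y)).trans_le (hk'k x y))
  exact ⟨hk', hk'0, hint,
    fun x => (integral_mono (hint x) (hk.integrable x) (hk'k x)).trans (hk.integral_le x)⟩

lemma trunc (hm : 0 ≤ m) : IsBoundedDensity μ (truncKernel k m) C :=
  hk.of_le (hk.measurable.min measurable_const) (fun x y => le_min (hk.nonneg x y) hm)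
    (fun _ _ => min_le_left _ _)

lemma tail (hm : 0 ≤ m) : IsBoundedDensity μ (tailKernel k m) C :=
  hk.of_le ((hk.measurable.sub measurable_const).max measurable_const)
    (fun _ _ => le_max_right _ _)
    (fun x y => max_le (by linarith [hk.nonneg x y]) (hk.nonneg x y))

lemma abs_tailMass_le (hm : 0 ≤ m) (y : X) : |tailMass μ k m y| ≤ C := by
  simpa [tailMass] using (hk.tail hm).abs_intOp_le (f := 1) (c := 1) (by simp) y

lemma intOp_eq_trunc_add_tail (hm : 0 ≤ m) {f : X → ℝ} (hf : Measurable f) {c : ℝ}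
    (hfc : ∀ y, |f y| ≤ c) :
    intOp μ k f = intOp μ (truncKernel k m) f + intOp μ (tailKernel k m) f := by
  funext x
  rw [Pi.add_apply, intOp, intOp, intOp, ← integral_add ((hk.trunc hm).integrable_mul hf hfc x)
    ((hk.tail hm).integrable_mul hf hfc x)]
  simp only [← mul_add, truncKernel_add_tailKernel]

lemma intOp_intOp [IsFiniteMeasure μ] {k' : X → X → ℝ} (hk' : Measurable (Function.uncurry k'))
    (hk'm : ∀ y z, |k' y z| ≤ m) {f : X → ℝ} (hf : Measurable f) {c : ℝ}
    (hfc : ∀ z, |f z| ≤ c) :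
    intOp μ k (intOp μ k' f) = intOp μ (compDensity μ k k') f := by
  funext x
  have hint : Integrable (Function.uncurry fun y z => f z * k' y z * k x y) (μ.prod μ) := by
    refine (((hk.integrable x).const_mul (c * m)).comp_fst μ).mono'
      (((hf.comp measurable_snd).mul hk').mul
        ((hk.measurable_apply x).comp measurable_fst)).aestronglyMeasurable
      (ae_of_all _ fun ⟨y, z⟩ => ?_)
    rw [Function.uncurry_apply_pair, Real.norm_eq_abs, abs_mul, abs_mul,
      abs_of_nonneg (hk.nonneg x y)]
    exact mul_le_mul_of_nonneg_right (mul_le_mul (hfc z) (hk'm y z) (abs_nonneg _)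
      ((abs_nonneg _).trans (hfc z))) (hk.nonneg x y)
  calc intOp μ k (intOp μ k' f) x = ∫ y, ∫ z, f z * k' y z * k x y ∂μ ∂μ := by
        simp only [intOp, integral_mul_const]
    _ = ∫ z, ∫ y, f z * k' y z * k x y ∂μ ∂μ := integral_integral_swap hint
    _ = intOp μ (compDensity μ k k') f x := by
        simp only [intOp, compDensity, ← integral_const_mul, mul_assoc]

lemma measurable_compDensity [SFinite μ] {k' : X → X → ℝ}
    (hk' : Measurable (Function.uncurry k')) (x : X) : Measurable (compDensity μ k k' x) :=
  ((hk'.comp measurable_swap).mul ((hk.measurable_apply x).comp measurable_snd)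
    ).stronglyMeasurable.integral_prod_right'.measurable

lemma tailMass_anti {m' : ℝ} (hm : 0 ≤ m) (hmm' : m ≤ m') (y : X) :
    tailMass μ k m' y ≤ tailMass μ k m y :=
  integral_mono ((hk.tail (hm.trans hmm')).integrable_mul measurable_one (c := 1) (by simp) y)
    ((hk.tail hm).integrable_mul measurable_one (c := 1) (by simp) y)
    fun z => mul_le_mul_of_nonneg_left (max_le_max (by linarith) le_rfl) zero_le_one

lemma tendsto_tailMass (y : X) : Tendsto (fun n : ℕ => tailMass μ k n y) atTop (𝓝 0) := by
  have hlim z : Tendsto (fun n : ℕ => (1 : X → ℝ) z * tailKernel k n y z) atTop (𝓝 0) :=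
    tendsto_const_nhds.congr' <| (eventually_ge_atTop ⌈k y z⌉₊).mono fun n hn => by
      simp [tailKernel, Nat.ceil_le.1 hn]
  have hbound (n : ℕ) z : ‖(1 : X → ℝ) z * tailKernel k n y z‖ ≤ k y z := by
    rw [Pi.one_apply, one_mul, Real.norm_eq_abs,
      abs_of_nonneg ((hk.tail n.cast_nonneg).nonneg y z)]
    exact max_le (by linarith [hk.nonneg y z, (n.cast_nonneg : (0 : ℝ) ≤ n)]) (hk.nonneg y z)
  simpa [tailMass, intOp] using tendsto_integral_of_dominated_convergence (k y)
    (fun n => ((hk.tail n.cast_nonneg).integrable_mul measurable_one (c := 1) (by simp)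
      y).aestronglyMeasurable)
    (hk.integrable y) (fun n => ae_of_all _ (hbound n)) (ae_of_all _ hlim)

lemma abs_intOp_intOp_sub_le [IsFiniteMeasure μ] (hm : 0 ≤ m) {f : X → ℝ} (hf : Measurable f)
    (hf1 : ∀ z, |f z| ≤ 1) (x x₀ : X) :
    |intOp μ k (intOp μ k f) x - intOp μ k (intOp μ k f) x₀| ≤
      ∫ z, |compDensity μ k (truncKernel k m) x z - compDensity μ k (truncKernel k m) x₀ z| ∂μ
        + (intOp μ k (tailMass μ k m) x + intOp μ k (tailMass μ k m) x₀) := by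
  set w := compDensity μ k (truncKernel k m)
  set g := intOp μ (tailKernel k m) f
  have hsplit : intOp μ k (intOp μ k f) = intOp μ w f + intOp μ k g := by
    rw [hk.intOp_eq_trunc_add_tail hm hf hf1,
      hk.intOp_add ((hk.trunc hm).bddMeas_intOp ⟨hf, 1, hf1⟩)
        ((hk.tail hm).bddMeas_intOp ⟨hf, 1, hf1⟩),
      hk.intOp_intOp (hk.trunc hm).measurable (abs_truncKernel_le hk.nonneg hm) hf hf1]
  have hw y : Integrable (w y) μ :=
    .of_bound (hk.measurable_compDensity (hk.trunc hm).measurable y).aestronglyMeasurable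
      (m * C)
      (ae_of_all _ fun z => hk.abs_intOp_le (fun y' => abs_truncKernel_le hk.nonneg hm y' z) y)
  have htail y : |intOp μ k g y| ≤ intOp μ k (tailMass μ k m) y :=
    abs_intOp_le_intOp (hk.nonneg y)
      (hk.integrable_mul (measurable_intOp (hk.tail hm).measurable measurable_one)
        (hk.abs_tailMass_le hm) y)
      fun y' => abs_intOp_le_intOp ((hk.tail hm).nonneg y')
        ((hk.tail hm).integrable_mul measurable_one (c := 1) (by simp) y') hf1
  rw [hsplit, Pi.add_apply, Pi.add_apply]
  calc |intOp μ w f x + intOp μ k g x - (intOp μ w f x₀ + intOp μ k g x₀)|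
      = |(intOp μ w f x - intOp μ w f x₀) + (intOp μ k g x - intOp μ k g x₀)| := by ring_nf
    _ ≤ |intOp μ w f x - intOp μ w f x₀| + (|intOp μ k g x| + |intOp μ k g x₀|) :=
        (abs_add_le _ _).trans (add_le_add_right (abs_sub _ _) _)
    _ ≤ _ := add_le_add (abs_intOp_sub_intOp_le hf hf1 (hw x) (hw x₀))
        (add_le_add (htail x) (htail x₀))

end IsBoundedDensity

end IntegralOperator

section Equicontinuity

variable {X : Type*} [MeasurableSpace X] [TopologicalSpace X] {μ : Measure X}
  {k : X → X → ℝ} {C : ℝ}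

lemma IsStrongFeller.continuous_compDensity (hSF : IsStrongFeller μ k) {k' : X → X → ℝ}
    (hk' : Measurable (Function.uncurry k')) {m : ℝ} (hk'm : ∀ y z, |k' y z| ≤ m) (z : X) :
    Continuous (compDensity μ k k' · z) :=
  hSF _ ⟨hk'.comp measurable_prodMk_right, m, fun y => hk'm y z⟩

lemma tendstoUniformly_intOp_tailMass [CompactSpace X] [SFinite μ]
    (hk : IsBoundedDensity μ k C) (hSF : IsStrongFeller μ k) :
    TendstoUniformly (fun n : ℕ => intOp μ k (tailMass μ k n)) 0 atTop := by
  have hr (n : ℕ) : BddMeas (tailMass μ k n) :=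
    (hk.tail n.cast_nonneg).bddMeas_intOp ⟨measurable_one, 1, by simp⟩
  have hint (n : ℕ) x : Integrable (fun y => tailMass μ k n y * k x y) μ :=
    hk.integrable_mul (hr n).1 (hk.abs_tailMass_le n.cast_nonneg) x
  refine Antitone.tendstoUniformly_of_forall_tendsto (fun n => hSF _ (hr n))
    (fun n n' hnn' x => integral_mono (hint n' x) (hint n x) fun y =>
      mul_le_mul_of_nonneg_right (hk.tailMass_anti n.cast_nonneg (Nat.cast_le.2 hnn') y)
        (hk.nonneg x y)) continuous_const fun x => ?_
  have hbound (n : ℕ) y : ‖tailMass μ k n y * k x y‖ ≤ C * k x y := by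
    rw [Real.norm_eq_abs, abs_mul, abs_of_nonneg (hk.nonneg x y)]
    exact mul_le_mul_of_nonneg_right (hk.abs_tailMass_le n.cast_nonneg y) (hk.nonneg x y)
  simpa [intOp] using tendsto_integral_of_dominated_convergence (f := fun _ => 0)
    (fun y => C * k x y)
    (fun n => (hint n x).aestronglyMeasurable) ((hk.integrable x).const_mul C)
    (fun n => ae_of_all _ (hbound n))
    (ae_of_all _ fun y => by simpa using (hk.tendsto_tailMass y).mul_const (k x y))

lemma tendsto_integral_abs_compDensity_sub [FirstCountableTopology X] [IsFiniteMeasure μ]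
    (hk : IsBoundedDensity μ k C) (hSF : IsStrongFeller μ k) {k' : X → X → ℝ}
    (hk' : Measurable (Function.uncurry k')) {m : ℝ} (hk'm : ∀ y z, |k' y z| ≤ m) (x₀ : X) :
    Tendsto (fun x => ∫ z, |compDensity μ k k' x z - compDensity μ k k' x₀ z| ∂μ)
      (𝓝 x₀) (𝓝 0) := by
  have hbound x z : |compDensity μ k k' x z| ≤ m * C := hk.abs_intOp_le (fun y => hk'm y z) x
  have hlim z : Tendsto (fun x => |compDensity μ k k' x z - compDensity μ k k' x₀ z|)
      (𝓝 x₀) (𝓝 0) := by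
    simpa using (((hSF.continuous_compDensity hk' hk'm z).tendsto x₀).sub_const
      (compDensity μ k k' x₀ z)).abs
  simpa using tendsto_integral_filter_of_dominated_convergence (f := fun _ => 0)
    (fun _ => 2 * (m * C))
    (Eventually.of_forall fun x => ((hk.measurable_compDensity hk' x).sub
      (hk.measurable_compDensity hk' x₀)).abs.aestronglyMeasurable)
    (Eventually.of_forall fun x => ae_of_all _ fun z => by
      rw [Real.norm_eq_abs, abs_abs, Pi.sub_apply]
      linarith [abs_sub (compDensity μ k k' x z) (compDensity μ k k' x₀ z), hbound x z,
        hbound x₀ z])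
    (integrable_const _) (ae_of_all _ hlim)

theorem equicontinuous_intOp_intOp [CompactSpace X] [FirstCountableTopology X]
    [IsFiniteMeasure μ] (hk : IsBoundedDensity μ k C) (hSF : IsStrongFeller μ k) :
    Set.Equicontinuous ((intOp μ k ∘ intOp μ k) '' {f | Measurable f ∧ ∀ z, |f z| ≤ 1}) := by
  intro x₀
  rw [Metric.equicontinuousAt_iff_right]
  intro ε hε
  obtain ⟨n, hn⟩ := (Metric.tendstoUniformly_iff.1 (tendstoUniformly_intOp_tailMass hk hSF)
    (ε / 4) (by positivity)).exists
  have hr y : intOp μ k (tailMass μ k n) y < ε / 4 :=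
    (le_abs_self _).trans_lt (by simpa [Real.dist_eq] using hn y)
  have hm : (0 : ℝ) ≤ n := n.cast_nonneg
  filter_upwards [(tendsto_integral_abs_compDensity_sub hk hSF (hk.trunc hm).measurable
    (abs_truncKernel_le hk.nonneg hm) x₀).eventually (gt_mem_nhds (half_pos hε))] with x hx
  rintro ⟨_, f, ⟨hf, hf1⟩, rfl⟩
  rw [Real.dist_eq, abs_sub_comm]
  exact (hk.abs_intOp_intOp_sub_le hm hf hf1 x x₀).trans_lt (by linarith [hr x, hr x₀])

end Equicontinuity

section EssentiallyBounded

variable {X : Type*} [MeasurableSpace X] {μ : Measure X}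

lemma Lp.ae_abs_le_norm (F : Lp ℝ ∞ μ) : ∀ᵐ x ∂μ, |F x| ≤ ‖F‖ := by
  filter_upwards [ae_le_eLpNormEssSup (f := ⇑F) (μ := μ)] with x hx
  have := ENNReal.toReal_mono (Lp.eLpNorm_ne_top F) (hx.trans_eq eLpNorm_exponent_top.symm)
  rwa [toReal_enorm, ← Lp.norm_def, Real.norm_eq_abs] at this

lemma Lp.exists_measurable_abs_le_norm (F : Lp ℝ ∞ μ) :
    ∃ f : X → ℝ, Measurable f ∧ (∀ x, |f x| ≤ ‖F‖) ∧ F =ᵐ[μ] f := by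
  refine ⟨fun x => max (-‖F‖) (min (F x) ‖F‖),
    measurable_const.max ((Lp.stronglyMeasurable F).measurable.min measurable_const),
    fun x => abs_le.2 ⟨le_max_left _ _, max_le (by linarith [norm_nonneg F]) (min_le_right _ _)⟩,
    ?_⟩
  filter_upwards [Lp.ae_abs_le_norm F] with x hx
  rw [min_eq_left (abs_le.1 hx).2, max_eq_right (abs_le.1 hx).1]

theorem isCompactOperator_of_equicontinuous [TopologicalSpace X] [CompactSpace X] [BorelSpace X]
    [IsFiniteMeasure μ] {S : Lp ℝ ∞ μ → Lp ℝ ∞ μ} {A : Set (X → ℝ)} {C : ℝ}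
    (hA : A.Equicontinuous) (hAC : ∀ g ∈ A, ∀ x, |g x| ≤ C)
    (hS : ∀ F : Lp ℝ ∞ μ, ‖F‖ ≤ 1 → ∃ g ∈ A, S F =ᵐ[μ] g) : IsCompactOperator S := by
  let B : Set (X →ᵇ ℝ) := {g | ⇑g ∈ A}
  have hB : IsCompact (closure B) :=
    BoundedContinuousFunction.arzela_ascoli (Set.Icc (-C) C) isCompact_Icc B
      (fun g x hg => abs_le.1 (hAC g hg x)) (hA.comp fun g : B => ⟨g, g.2⟩)
  let toLp := BoundedContinuousFunction.toLp (E := ℝ) ∞ μ ℝ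
  refine ⟨toLp '' closure B, hB.image toLp.continuous,
    mem_of_superset (Metric.closedBall_mem_nhds 0 one_pos) fun F hF => ?_⟩
  obtain ⟨g, hg, hSg⟩ := hS F (by simpa using hF)
  let g' : X →ᵇ ℝ := .mkOfCompact ⟨g, hA.continuous ⟨g, hg⟩⟩
  exact ⟨g', subset_closure hg,
    Lp.ext ((BoundedContinuousFunction.coeFn_toLp ∞ μ ℝ g').trans hSg.symm)⟩

end EssentiallyBounded

section WeightedKoopman

variable {X : Type*} [MeasurableSpace X] [MeasurableSpace.CountableOrCountablyGenerated X X]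
  {μ : Measure X} {κ : Kernel X X} {φ : X → ℝ}

def weightedDensity (μ : Measure X) (κ : Kernel X X) (φ : X → ℝ) : X → X → ℝ :=
  fun x y => Real.exp (φ x) * (κ.rnDeriv (Kernel.const X μ) x y).toReal

lemma PR_eq_intOp [IsFiniteMeasure μ] [IsFiniteKernel κ] (hac : ∀ x, κ x ≪ μ) :
    PR φ κ = intOp μ (weightedDensity μ κ φ) := by
  funext f x
  have hκ : κ x = μ.withDensity (κ.rnDeriv (Kernel.const X μ) x) := by
    rw [← Kernel.withDensity_rnDeriv_eq (η := Kernel.const X μ) (by simpa using hac x),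
      Kernel.withDensity_apply _ (Kernel.measurable_rnDeriv _ _), Kernel.const_apply]
  have hfin : ∀ᵐ y ∂μ, κ.rnDeriv (Kernel.const X μ) x y < ∞ := by
    simpa using Kernel.rnDeriv_lt_top κ (Kernel.const X μ) (a := x)
  rw [PR, intOp, hκ, integral_withDensity_eq_integral_toReal_smul
    (Kernel.measurable_rnDeriv_right _ _ x) hfin, ← integral_const_mul]
  congr with y
  simp only [weightedDensity, smul_eq_mul]
  ring

lemma isBoundedDensity_weightedDensity [IsFiniteMeasure μ] [IsFiniteKernel κ]
    (hac : ∀ x, κ x ≪ μ) (hsub : ∀ x, κ x Set.univ ≤ 1) (hφ : Measurable φ) {B : ℝ}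
    (hB : ∀ x, φ x ≤ B) : IsBoundedDensity μ (weightedDensity μ κ φ) (Real.exp B) := by
  have hint x : Integrable (fun y => (κ.rnDeriv (Kernel.const X μ) x y).toReal) μ := by
    refine integrable_toReal_of_lintegral_ne_top
      (Kernel.measurable_rnDeriv_right _ _ x).aemeasurable ?_
    have h := Kernel.lintegral_rnDeriv (η := Kernel.const X μ) (a := x) (by simpa using hac x)
    rw [Kernel.const_apply] at h
    exact h ▸ measure_ne_top (κ x) Set.univ
  refine ⟨(hφ.comp measurable_fst).exp.mul (Kernel.measurable_rnDeriv _ _).ennreal_toReal,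
    fun x y => mul_nonneg (Real.exp_pos _).le ENNReal.toReal_nonneg,
    fun x => (hint x).const_mul _, fun x => ?_⟩
  calc ∫ y, weightedDensity μ κ φ x y ∂μ = PR φ κ 1 x := by simp [PR_eq_intOp hac, intOp]
    _ = Real.exp (φ x) * (κ x).real Set.univ := by simp [PR]
    _ ≤ Real.exp B * 1 := mul_le_mul (Real.exp_le_exp.2 (hB x))
        (ENNReal.toReal_le_of_le_ofReal zero_le_one (by simpa using hsub x)) (by positivity)
        (by positivity)
    _ = Real.exp B := mul_one _

end WeightedKoopman

/-- If `P` is strong Feller, then for every `n ≥ 2` the operator induced by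
`P^n` on `L^∞(M,μ)` is a compact operator (the image of the unit ball is relatively compact
in the essential-supremum norm). -/
theorem statement0 (μ : Measure M) (κ : Kernel M M) (φ : M → ℝ)
    (hsetup : Setup μ κ φ)
    (hSF : ∀ f : M → ℝ, BddMeas f → Continuous (PR φ κ f))
    (T : Lp ℝ ⊤ μ →L[ℝ] Lp ℝ ⊤ μ)
    (hT : ∀ f : M → ℝ, BddMeas f → ∀ F : Lp ℝ ⊤ μ, ⇑F =ᵐ[μ] f → ⇑(T F) =ᵐ[μ] PR φ κ f) :
    ∀ n : ℕ, 2 ≤ n → IsCompactOperator ⇑(T ^ n) := by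
  intro n hn
  have := hsetup.prob
  have : IsFiniteKernel κ := ⟨⟨1, ENNReal.one_lt_top, hsetup.subMarkov⟩⟩
  obtain ⟨B, hB⟩ := (isCompact_range hsetup.contφ).bddAbove
  have hk := isBoundedDensity_weightedDensity hsetup.ac hsetup.subMarkov
    hsetup.contφ.measurable fun x => hB ⟨x, rfl⟩
  rw [PR_eq_intOp hsetup.ac] at hSF hT
  have hT2 : IsCompactOperator ⇑(T ^ 2) := by
    refine isCompactOperator_of_equicontinuous (C := 1 * Real.exp B * Real.exp B)
      (equicontinuous_intOp_intOp hk hSF) ?_ fun F hF => ?_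
    · rintro _ ⟨f, ⟨-, hf1⟩, rfl⟩ x
      exact hk.abs_intOp_le (hk.abs_intOp_le hf1) x
    · obtain ⟨f, hfm, hfF, hFf⟩ := Lp.exists_measurable_abs_le_norm F
      have hf1 x : |f x| ≤ 1 := (hfF x).trans hF
      have hf : BddMeas f := ⟨hfm, 1, hf1⟩
      exact ⟨_, ⟨f, ⟨hfm, hf1⟩, rfl⟩, hT _ (hk.bddMeas_intOp hf) _ (hT f hf F hFf)⟩
  obtain ⟨j, rfl⟩ := Nat.exists_eq_add_of_le' hn
  rw [pow_add]
  exact hT2.clm_comp (T ^ j)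

end

end QEM
end

section
/- Assume Hypothesis (HA). Then there exists a natural number k ≥ 1 such that σ_per(P) = {λ e^{2πi j/k} : j = 0, 1, …, k−1}; in particular the point peripheral spectrum of P is finite and consists exactly of λ times the k-th roots of unity. -/
/-!
Normalize a peripheral eigenfunction `f` (eigenvalue `λω`, `|ω| = 1`) so that `|f| = g`:
`P|f| ≥ λ|f|` and `P*μ = λμ` force `P|f| = λ|f|`, so `|f|` is a multiple of `g` by simplicity of
the eigenvalue `λ`. Equality in `|P f| ≤ P|f|` then makes the phase of `f` constant along the
kernel: `f = ω (f(x)/g(x)) g` holds `κ(x,·)`-a.e. Hence `f₁ f₂ / g` is an eigenfunction for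
`ω₁ ω₂`, so the peripheral phases form a monoid; and `P` maps the indicator of the phase set
`{f = ωc g}` to that of `{f = c g}`, so by `P*μ = λμ` the disjoint sets `{f = ωⁿ c g}` carry
equal `g μ`-mass, which bounds the order of `ω`. A diagonal argument over countably many
eigenfunctions makes the bound uniform, and a monoid of bounded exponent in `ℂ` is a finite
subgroup of the circle, i.e. the group of `k`-th roots of unity.
-/

open MeasureTheory ProbabilityTheory Filter Topology

namespace QEM

noncomputable section

variable {M : Type*} [MetricSpace M] [CompactSpace M] [MeasurableSpace M] [BorelSpace M]

/-- Equality case of `‖∫ f‖ ≤ ∫ ‖f‖`: the phase of `f` is a.e. the constant phase `c`. -/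
theorem ae_eq_mul_of_integral_eq_mul {X : Type*} [MeasurableSpace X] {ν : Measure X}
    {f : X → ℂ} {g : X → ℝ} (hf : Integrable f ν) (hg : Integrable g ν)
    (hfg : ∀ᵐ y ∂ν, ‖f y‖ = g y) {c : ℂ} (hc : ‖c‖ = 1) (h : ∫ y, f y ∂ν = c * ∫ y, g y ∂ν) :
    ∀ᵐ y ∂ν, f y = c * g y := by
  have hcc : c * starRingEnd ℂ c = 1 := by
    rw [Complex.mul_conj, Complex.normSq_eq_norm_sq, hc]; norm_num
  set u : X → ℝ := fun y => (starRingEnd ℂ c * f y).re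
  have hu_le : u ≤ᵐ[ν] g := by
    filter_upwards [hfg] with y hy
    calc u y ≤ ‖starRingEnd ℂ c * f y‖ := Complex.re_le_norm _
      _ = g y := by rw [norm_mul, RCLike.norm_conj, hc, one_mul, hy]
  have hu_integral : ∫ y, u y ∂ν = ∫ y, g y ∂ν := by
    calc ∫ y, u y ∂ν = (starRingEnd ℂ c * ∫ y, f y ∂ν).re := by
          rw [← integral_const_mul]; exact integral_re (hf.const_mul _)
      _ = ∫ y, g y ∂ν := by rw [h, ← mul_assoc, mul_comm _ c, hcc, one_mul, Complex.ofReal_re]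
  filter_upwards [hfg, (integral_eq_iff_of_ae_le ((hf.const_mul _).re) hg hu_le).1 hu_integral]
    with y hy hyu
  have hnorm : ‖starRingEnd ℂ c * f y‖ = g y := by rw [norm_mul, RCLike.norm_conj, hc, one_mul, hy]
  have hreal : starRingEnd ℂ c * f y = g y := by
    rw [Complex.eq_re_of_ofReal_le (r := 0) (z := starRingEnd ℂ c * f y)
      (by simpa using Complex.re_eq_norm.1 (hyu.trans hnorm.symm))]
    exact congrArg Complex.ofReal hyu
  rw [← hreal, ← mul_assoc, hcc, one_mul]

theorem pow_injOn_range_of_pow_factorial_ne_one {G₀ : Type*} [GroupWithZero G₀] {ω : G₀}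
    (hω : ω ≠ 0) {N : ℕ} (h : ω ^ N.factorial ≠ 1) : Set.InjOn (ω ^ ·) (Finset.range N) := by
  have key : ∀ a b, a < b → b < N → ω ^ a ≠ ω ^ b := by
    intro a b hab hbN heq
    have hord : ω ^ (b - a) = 1 := by
      rw [pow_sub₀ _ hω hab.le, ← heq, mul_inv_cancel₀ (pow_ne_zero _ hω)]
    obtain ⟨m, hm⟩ := Nat.dvd_factorial (Nat.sub_pos_of_lt hab) (by omega : b - a ≤ N)
    exact h (by rw [hm, pow_mul, hord, one_pow])
  intro a ha b hb heq
  simp only [Finset.coe_range, Set.mem_Iio] at ha hb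
  rcases lt_trichotomy a b with hab | hab | hab
  · exact absurd heq (key a b hab hb)
  · exact hab
  · exact absurd heq.symm (key b a hab ha)

/-- `Ω` is a finite subgroup of `ℂˣ`, hence the group of `k`-th roots of unity, `k = |Ω|`. -/
theorem exists_forall_mem_iff_pow_eq_one {Ω : Set ℂ} {B : ℕ} (hB : 0 < B) (h1 : 1 ∈ Ω)
    (hmul : ∀ a ∈ Ω, ∀ b ∈ Ω, a * b ∈ Ω) (hpow : ∀ ω ∈ Ω, ω ^ B = 1) :
    ∃ k, 0 < k ∧ ∀ z, z ∈ Ω ↔ z ^ k = 1 := by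
  have hpowΩ : ∀ ω ∈ Ω, ∀ n, ω ^ n ∈ Ω := fun ω hω n => by
    induction n with
    | zero => rwa [pow_zero]
    | succ n ih => rw [pow_succ]; exact hmul _ ih _ hω
  let G : Subgroup ℂˣ :=
    { carrier := {u | (u : ℂ) ∈ Ω}
      mul_mem' := fun ha hb => hmul _ ha _ hb
      one_mem' := h1
      inv_mem' := fun {u} hu => by
        have hinv : u⁻¹ = u ^ (B - 1) := by
          rw [inv_eq_iff_mul_eq_one, ← pow_succ', Nat.sub_add_cancel hB]
          exact Units.ext (by simpa using hpow _ hu)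
        simpa [hinv] using hpowΩ _ hu (B - 1) }
  have : NeZero B := ⟨hB.ne'⟩
  have hGB : G ≤ rootsOfUnity B ℂ := fun u hu =>
    (mem_rootsOfUnity' B u).2 (hpow _ hu)
  have : Finite G := Finite.of_injective _ (Subgroup.inclusion_injective hGB)
  set k := Nat.card G
  have hk : 0 < k := Nat.card_pos
  have : NeZero k := ⟨hk.ne'⟩
  have hGk : G = rootsOfUnity k ℂ := by
    refine Subgroup.eq_of_le_of_card_ge (fun u hu => ?_) (Complex.card_rootsOfUnity k).le
    have hu_pow : (⟨u, hu⟩ : G) ^ k = 1 := pow_card_eq_one'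
    exact (mem_rootsOfUnity k u).2 (congrArg Subtype.val hu_pow)
  refine ⟨k, hk, fun z => ⟨fun hz => ?_, fun hz => ?_⟩⟩
  · have hz0 : z ≠ 0 := by
      rintro rfl
      simpa [hB.ne'] using hpow 0 hz
    have hzk : Units.mk0 z hz0 ∈ rootsOfUnity k ℂ := hGk ▸ hz
    rwa [mem_rootsOfUnity', Units.val_mk0] at hzk
  · have hz0 : z ≠ 0 := by rintro rfl; simp [hk.ne'] at hz
    have : Units.mk0 z hz0 ∈ rootsOfUnity k ℂ := (mem_rootsOfUnity' k _).2 hz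
    exact (hGk ▸ this : Units.mk0 z hz0 ∈ G)

theorem pow_eq_one_iff_exists_eq_rootU {k : ℕ} (hk : k ≠ 0) {z : ℂ} :
    z ^ k = 1 ↔ ∃ j, j < k ∧ z = rootU k j := by
  have : NeZero k := ⟨hk⟩
  have hζ := Complex.isPrimitiveRoot_exp k hk
  have hroot j : rootU k j = Complex.exp (2 * Real.pi * Complex.I / k) ^ j := by
    rw [rootU, ← Complex.exp_nat_mul]
    congr 1
    ring
  simp_rw [hroot]
  refine ⟨fun hz => ?_, ?_⟩
  · obtain ⟨j, hj, rfl⟩ := hζ.eq_pow_of_pow_eq_one hz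
    exact ⟨j, hj, rfl⟩
  · rintro ⟨j, -, rfl⟩
    rw [← pow_mul, pow_mul', hζ.pow_eq_one, one_pow]

theorem BddMeas.integrable {X : Type*} [MeasurableSpace X] {ν : Measure X} [IsFiniteMeasure ν]
    {f : X → ℝ} (hf : BddMeas f) : Integrable f ν :=
  ⟨hf.1.aestronglyMeasurable, HasFiniteIntegral.of_bounded
    (ae_of_all _ fun x => (Real.norm_eq_abs _).trans_le (hf.2.choose_spec x))⟩

theorem BddMeasC.integrable {X : Type*} [MeasurableSpace X] {ν : Measure X} [IsFiniteMeasure ν]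
    {f : X → ℂ} (hf : BddMeasC f) : Integrable f ν :=
  ⟨hf.1.aestronglyMeasurable, HasFiniteIntegral.of_bounded (ae_of_all _ hf.2.choose_spec)⟩

theorem BddMeasC.norm {X : Type*} [MeasurableSpace X] {f : X → ℂ} (hf : BddMeasC f) :
    BddMeas (fun x => ‖f x‖) :=
  ⟨hf.1.norm, hf.2.choose, fun x => (abs_norm _).trans_le (hf.2.choose_spec x)⟩

structure IsNormalizedEigenfunction {X : Type*} [MeasurableSpace X] (μ : Measure X)
    (κ : Kernel X X) (φ : X → ℝ) (lam : ℝ) (g : X → ℝ) (ω : ℂ) (f : X → ℂ) : Prop where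
  measurable : Measurable f
  norm_le : ∀ x, ‖f x‖ ≤ g x
  norm_ae_eq : ∀ᵐ x ∂μ, ‖f x‖ = g x
  eigen : PC φ κ f =ᵐ[μ] fun x => lam * ω * f x

theorem IsNormalizedEigenfunction.bddMeasC {X : Type*} [MeasurableSpace X] {μ : Measure X}
    {κ : Kernel X X} {φ : X → ℝ} {lam : ℝ} {g : X → ℝ} {ω : ℂ} {f : X → ℂ}
    (hf : IsNormalizedEigenfunction μ κ φ lam g ω f) (hg : BddMeas g) : BddMeasC f :=
  ⟨hf.measurable, hg.2.choose,
    fun x => (hf.norm_le x).trans ((le_abs_self _).trans (hg.2.choose_spec x))⟩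

def phaseProduct {X : Type*} (g : X → ℝ) (f₁ f₂ : X → ℂ) : X → ℂ :=
  fun y => if 0 < g y then f₁ y * f₂ y / g y else 0

def phaseSet {X : Type*} (g : X → ℝ) (f : X → ℂ) (c : ℂ) : Set X :=
  {y | 0 < g y ∧ f y = c * g y}

theorem measurableSet_phaseSet {X : Type*} [MeasurableSpace X] {g : X → ℝ} {f : X → ℂ}
    (hf : Measurable f) (hg : Measurable g) (c : ℂ) : MeasurableSet (phaseSet g f c) :=
  (measurableSet_lt measurable_const hg).inter
    (measurableSet_eq_fun hf (measurable_const.mul (Complex.measurable_ofReal.comp hg)))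

theorem phaseSet_disjoint {X : Type*} {g : X → ℝ} {f : X → ℂ} {c c' : ℂ} (hcc' : c ≠ c') :
    Disjoint (phaseSet g f c) (phaseSet g f c') :=
  Set.disjoint_left.2 fun _ ⟨hy, hyc⟩ ⟨_, hyc'⟩ =>
    hcc' (mul_right_cancel₀ (Complex.ofReal_ne_zero.2 hy.ne') (hyc.symm.trans hyc'))

section Operator

variable {X : Type*} [MetricSpace X] [MeasurableSpace X] {μ : Measure X} {κ : Kernel X X}
  {φ : X → ℝ} {T : Lp ℂ ⊤ μ →L[ℂ] Lp ℂ ⊤ μ} {lam : ℝ} {g : X → ℝ}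

theorem Setup.isFiniteMeasure_kernel (h : Setup μ κ φ) (x : X) : IsFiniteMeasure (κ x) :=
  ⟨(h.subMarkov x).trans_lt ENNReal.one_lt_top⟩

theorem Setup.ae_kernel (h : Setup μ κ φ) {p : X → Prop} (hp : ∀ᵐ y ∂μ, p y) (x : X) :
    ∀ᵐ y ∂κ x, p y :=
  (h.ac x).ae_le hp

theorem HypHA.PR_eq_of_ae_eq_mul_g (h : HypHA μ κ φ T lam g) {x : X} {f : X → ℝ} {c : ℝ}
    (hf : f =ᵐ[κ x] fun y => c * g y) : PR φ κ f x = c * (lam * g x) := by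
  rw [← congrFun h.g_eigen x, PR, PR, integral_congr_ae hf, integral_const_mul]
  ring

theorem HypHA.PC_eq_of_ae_eq_mul_g (h : HypHA μ κ φ T lam g) {x : X} {f : X → ℂ} {c : ℂ}
    (hf : f =ᵐ[κ x] fun y => c * g y) : PC φ κ f x = c * (lam * g x) := by
  have hPg : (Real.exp (φ x) : ℂ) * (∫ y, g y ∂κ x : ℝ) = lam * g x := by
    exact_mod_cast congrFun h.g_eigen x
  rw [PC, integral_congr_ae hf, integral_const_mul, integral_complex_ofReal]
  linear_combination c * hPg

theorem HypHA.integral_kernel_g_pos (h : HypHA μ κ φ T lam g) {x : X} (hx : 0 < g x) :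
    0 < ∫ y, g y ∂κ x := by
  have hPg : Real.exp (φ x) * ∫ y, g y ∂κ x = lam * g x := congrFun h.g_eigen x
  exact pos_of_mul_pos_right (hPg ▸ mul_pos h.lam_pos hx) (Real.exp_pos _).le

theorem HypHA.integral_g_pos (h : HypHA μ κ φ T lam g) : 0 < ∫ x, g x ∂μ := by
  have := h.setup.prob
  obtain ⟨x, hx⟩ : ∃ x, g x ≠ 0 := by
    by_contra! h'
    exact h.g_ne (funext h')
  rw [h.g_int]
  refine ENNReal.toReal_pos (h.setup.fullSupp _ (isOpen_lt continuous_const h.g_cont) ?_).ne'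
    (measure_ne_top μ _)
  exact ⟨x, (h.g_nonneg x).lt_of_ne' hx⟩

theorem HypHA.exists_pos_of_ae (h : HypHA μ κ φ T lam g) {p : X → Prop} (hp : ∀ᵐ x ∂μ, p x) :
    ∃ x, 0 < g x ∧ p x := by
  by_contra! hcon
  have hnull : ∀ᵐ x ∂μ, ¬ 0 < g x := hp.mono fun x hx hgx => hcon x hgx hx
  have hzero : g =ᵐ[μ] 0 := hnull.mono fun x hx => le_antisymm (not_lt.1 hx) (h.g_nonneg x)
  exact h.integral_g_pos.ne' (by rw [integral_congr_ae hzero]; simp)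

theorem HypHA.norm_eq_one_of_perSpec (h : HypHA μ κ φ T lam g) {ω : ℂ}
    (hω : PerSpec μ κ φ lam (lam * ω)) : ‖ω‖ = 1 := by
  have hα := hω.1
  rw [norm_mul, Complex.norm_real, Real.norm_of_nonneg h.lam_pos.le] at hα
  exact mul_eq_left₀ h.lam_pos.ne' |>.1 hα

theorem HypHA.not_ae_eq_zero_of_norm_ae_eq (h : HypHA μ κ φ T lam g) {f : X → ℂ}
    (hf : ∀ᵐ x ∂μ, ‖f x‖ = g x) : ¬ f =ᵐ[μ] 0 := by
  intro hf0
  have hg0 : g =ᵐ[μ] 0 := by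
    filter_upwards [hf, hf0] with x hx hx0
    rw [← hx, hx0, Pi.zero_apply, norm_zero, Pi.zero_apply]
  exact h.integral_g_pos.ne' (by rw [integral_congr_ae hg0]; simp)

end Operator

section Compact

variable {X : Type*} [MetricSpace X] [CompactSpace X] [MeasurableSpace X] [BorelSpace X]
  {μ : Measure X} {κ : Kernel X X} {φ : X → ℝ} {T : Lp ℂ ⊤ μ →L[ℂ] Lp ℂ ⊤ μ} {lam : ℝ}
  {g : X → ℝ}

theorem HypHA.bddMeas_indicator_g (h : HypHA μ κ φ T lam g) {A : Set X} (hA : MeasurableSet A) :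
    BddMeas (A.indicator g) := by
  obtain ⟨C, hC⟩ := (isCompact_range h.g_cont).bddAbove
  refine ⟨h.g_cont.measurable.indicator hA, C, fun x => ?_⟩
  rw [abs_of_nonneg (Set.indicator_nonneg (fun y _ => h.g_nonneg y) x)]
  exact (Set.indicator_le_self' (fun y _ => h.g_nonneg y) x).trans (hC ⟨x, rfl⟩)

theorem HypHA.bddMeas_g (h : HypHA μ κ φ T lam g) : BddMeas g := by
  simpa using h.bddMeas_indicator_g MeasurableSet.univ

theorem HypHA.bddMeas_PR (h : HypHA μ κ φ T lam g) {f : X → ℝ} (hf : BddMeas f) :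
    BddMeas (PR φ κ f) := by
  obtain ⟨Cφ, hCφ⟩ := (isCompact_range h.setup.contφ).bddAbove
  obtain ⟨C, hC⟩ := hf.2
  refine ⟨(h.strongFeller f hf).measurable, Real.exp Cφ * C, fun x => ?_⟩
  have := h.setup.isFiniteMeasure_kernel x
  have hint : |∫ y, f y ∂κ x| ≤ C := by
    have hmass : (κ x).real Set.univ ≤ 1 := by
      simpa [measureReal_def] using ENNReal.toReal_mono ENNReal.one_ne_top (h.setup.subMarkov x)
    calc |∫ y, f y ∂κ x| ≤ C * (κ x).real Set.univ := by
          simpa only [Real.norm_eq_abs] using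
            norm_integral_le_of_norm_le_const (μ := κ x) (f := f) (ae_of_all _ hC)
      _ ≤ C := mul_le_of_le_one_right ((abs_nonneg _).trans (hC x)) hmass
  rw [PR, abs_mul, abs_of_pos (Real.exp_pos _)]
  exact mul_le_mul (Real.exp_le_exp.2 (hCφ ⟨x, rfl⟩)) hint (abs_nonneg _) (Real.exp_pos _).le

theorem HypHA.ae_kernel_g_eq_zero (h : HypHA μ κ φ T lam g) {x : X} (hx : ¬ 0 < g x) :
    ∀ᵐ y ∂κ x, g y = 0 := by
  have := h.setup.isFiniteMeasure_kernel x
  have hgx : g x = 0 := le_antisymm (not_lt.1 hx) (h.g_nonneg x)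
  have hint : ∫ y, g y ∂κ x = 0 := by
    have hPg : Real.exp (φ x) * ∫ y, g y ∂κ x = lam * g x := congrFun h.g_eigen x
    rw [hgx, mul_zero] at hPg
    exact (mul_eq_zero.1 hPg).resolve_left (Real.exp_ne_zero _)
  exact (integral_eq_zero_iff_of_nonneg h.g_nonneg h.bddMeas_g.integrable).1 hint

theorem HypHA.PR_norm_ae_eq (h : HypHA μ κ φ T lam g) {α : ℂ} (hα : ‖α‖ = lam) {f : X → ℂ}
    (hf : BddMeasC f) (heig : PC φ κ f =ᵐ[μ] fun x => α * f x) :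
    PR φ κ (fun x => ‖f x‖) =ᵐ[μ] fun x => lam * ‖f x‖ := by
  have := h.setup.prob
  have hle : (fun x => lam * ‖f x‖) ≤ᵐ[μ] PR φ κ (fun x => ‖f x‖) := by
    filter_upwards [heig] with x hx
    have := h.setup.isFiniteMeasure_kernel x
    calc lam * ‖f x‖ = ‖PC φ κ f x‖ := by rw [hx, norm_mul, hα]
      _ ≤ PR φ κ (fun x => ‖f x‖) x := by
        rw [PC, PR, norm_mul, Complex.norm_real, Real.norm_of_nonneg (Real.exp_pos _).le]
        exact mul_le_mul_of_nonneg_left (norm_integral_le_integral_norm f) (Real.exp_pos _).le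
  refine ((integral_eq_iff_of_ae_le (hf.norm.integrable.const_mul lam)
    (h.bddMeas_PR hf.norm).integrable hle).1 ?_).symm
  rw [integral_const_mul, h.Pstar _ hf.norm]

theorem HypHA.exists_norm_ae_eq_mul_g (h : HypHA μ κ φ T lam g) {α : ℂ} (hα : ‖α‖ = lam)
    {f : X → ℂ} (hf : BddMeasC f) (hne : ¬ f =ᵐ[μ] 0) (heig : PC φ κ f =ᵐ[μ] fun x => α * f x) :
    ∃ c, 0 < c ∧ ∀ᵐ x ∂μ, ‖f x‖ = c * g x := by
  obtain ⟨c, hc⟩ := h.eigen_dim _ hf.norm (h.PR_norm_ae_eq hα hf heig)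
  refine ⟨c, ?_, hc⟩
  by_contra! hc0
  refine hne (hc.mono fun x hx => ?_)
  exact norm_le_zero_iff.1 (hx.trans_le (mul_nonpos_of_nonpos_of_nonneg hc0 (h.g_nonneg x)))

theorem HypHA.exists_isNormalizedEigenfunction (h : HypHA μ κ φ T lam g) {ω : ℂ}
    (hω : PerSpec μ κ φ lam (lam * ω)) : ∃ f, IsNormalizedEigenfunction μ κ φ lam g ω f := by
  obtain ⟨hα, f₀, hf₀, hne, heig⟩ := hω
  obtain ⟨c, hc, hnorm⟩ := h.exists_norm_ae_eq_mul_g hα hf₀ hne heig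
  set f₁ : X → ℂ := fun x => (c : ℂ)⁻¹ * f₀ x
  have hf₁ : ∀ᵐ x ∂μ, ‖f₁ x‖ = g x := by
    filter_upwards [hnorm] with x hx
    rw [norm_mul, hx, norm_inv, Complex.norm_real, Real.norm_of_nonneg hc.le,
      inv_mul_cancel_left₀ hc.ne']
  -- redefine `f₁` on the null set where `‖f₁‖ ≠ g`, so that `‖f‖ ≤ g` holds everywhere
  set f : X → ℂ := fun x => if ‖f₁ x‖ = g x then f₁ x else 0
  have hff₁ : f =ᵐ[μ] f₁ := hf₁.mono fun x hx => if_pos hx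
  have hPC : ∀ x, PC φ κ f x = (c : ℂ)⁻¹ * PC φ κ f₀ x := fun x => by
    rw [PC, PC, integral_congr_ae (h.setup.ae_kernel hff₁ x), integral_const_mul]
    ring
  refine ⟨f, ?_, fun x => ?_, ?_, ?_⟩
  · exact Measurable.ite (measurableSet_eq_fun (measurable_const.mul hf₀.1).norm
      h.g_cont.measurable) (measurable_const.mul hf₀.1) measurable_const
  · by_cases hx : ‖f₁ x‖ = g x
    · simp only [f, if_pos hx, hx.le]
    · simp only [f, if_neg hx, norm_zero, h.g_nonneg x]
  · filter_upwards [hf₁, hff₁] with x hx hx'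
    rw [hx', hx]
  · filter_upwards [heig, hff₁] with x hx hx'
    rw [hPC, hx, hx']
    simp only [f₁]
    ring

theorem HypHA.perSpec_of_isNormalizedEigenfunction (h : HypHA μ κ φ T lam g) {ω : ℂ}
    (hω : ‖ω‖ = 1) {f : X → ℂ} (hf : IsNormalizedEigenfunction μ κ φ lam g ω f) :
    PerSpec μ κ φ lam (lam * ω) := by
  refine ⟨?_, f, hf.bddMeasC h.bddMeas_g, h.not_ae_eq_zero_of_norm_ae_eq hf.norm_ae_eq, hf.eigen⟩
  rw [norm_mul, hω, mul_one, Complex.norm_real, Real.norm_of_nonneg h.lam_pos.le]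

/-- Equality holds in `|P f| ≤ P |f|` at such a point, which forces `f` to have constant phase
`κ x`-almost everywhere. -/
theorem HypHA.ae_kernel_eq_mul_g (h : HypHA μ κ φ T lam g) {ω : ℂ} (hω : ‖ω‖ = 1) {f : X → ℂ}
    (hf : IsNormalizedEigenfunction μ κ φ lam g ω f) {x : X} (hgx : 0 < g x)
    (hfx : ‖f x‖ = g x) (hPx : PC φ κ f x = lam * ω * f x) :
    ∀ᵐ y ∂κ x, f y = ω * (f x / g x) * g y := by
  have := h.setup.isFiniteMeasure_kernel x
  have hgx' : (g x : ℂ) ≠ 0 := by exact_mod_cast hgx.ne'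
  refine ae_eq_mul_of_integral_eq_mul (hf.bddMeasC h.bddMeas_g).integrable
    h.bddMeas_g.integrable (h.setup.ae_kernel hf.norm_ae_eq x) ?_ ?_
  · rw [norm_mul, norm_div, hω, hfx, Complex.norm_real, Real.norm_of_nonneg (h.g_nonneg x),
      div_self hgx.ne', one_mul]
  · have hPg : (Real.exp (φ x) : ℂ) * (∫ y, g y ∂κ x : ℝ) = lam * g x := by
      exact_mod_cast congrFun h.g_eigen x
    have hPf : (Real.exp (φ x) : ℂ) * ∫ y, f y ∂κ x = lam * ω * f x := hPx
    refine mul_left_cancel₀ (Complex.ofReal_ne_zero.2 (Real.exp_pos (φ x)).ne') ?_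
    rw [hPf, mul_left_comm, hPg]
    field_simp

theorem HypHA.perSpec_lam (h : HypHA μ κ φ T lam g) : PerSpec μ κ φ lam lam := by
  have hg : IsNormalizedEigenfunction μ κ φ lam g 1 (fun x => g x) := by
    refine ⟨Complex.measurable_ofReal.comp h.g_cont.measurable, fun x => ?_,
      ae_of_all _ fun x => ?_, ae_of_all _ fun x => ?_⟩
    · rw [Complex.norm_real, Real.norm_of_nonneg (h.g_nonneg x)]
    · rw [Complex.norm_real, Real.norm_of_nonneg (h.g_nonneg x)]
    · rw [h.PC_eq_of_ae_eq_mul_g (c := 1) (ae_of_all _ fun y => (one_mul _).symm)]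
      ring
  simpa using h.perSpec_of_isNormalizedEigenfunction norm_one hg

theorem HypHA.isNormalizedEigenfunction_phaseProduct (h : HypHA μ κ φ T lam g) {ω₁ ω₂ : ℂ}
    (hω₁ : ‖ω₁‖ = 1) (hω₂ : ‖ω₂‖ = 1) {f₁ f₂ : X → ℂ}
    (hf₁ : IsNormalizedEigenfunction μ κ φ lam g ω₁ f₁)
    (hf₂ : IsNormalizedEigenfunction μ κ φ lam g ω₂ f₂) :
    IsNormalizedEigenfunction μ κ φ lam g (ω₁ * ω₂) (phaseProduct g f₁ f₂) := by
  have hnorm : ∀ y, 0 < g y → ‖phaseProduct g f₁ f₂ y‖ = ‖f₁ y‖ * ‖f₂ y‖ / g y := fun y hy => by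
    rw [phaseProduct, if_pos hy, norm_div, norm_mul, Complex.norm_real, Real.norm_of_nonneg hy.le]
  refine ⟨Measurable.ite (measurableSet_lt measurable_const h.g_cont.measurable)
    ((hf₁.measurable.mul hf₂.measurable).div (Complex.measurable_ofReal.comp h.g_cont.measurable))
    measurable_const, fun y => ?_, ?_, ?_⟩
  · by_cases hy : 0 < g y
    · rw [hnorm y hy, div_le_iff₀ hy]
      exact mul_le_mul (hf₁.norm_le y) (hf₂.norm_le y) (norm_nonneg _) (h.g_nonneg y)
    · simp [phaseProduct, hy, h.g_nonneg y]
  · filter_upwards [hf₁.norm_ae_eq, hf₂.norm_ae_eq] with y hy₁ hy₂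
    by_cases hy : 0 < g y
    · rw [hnorm y hy, hy₁, hy₂, mul_div_cancel_right₀ _ hy.ne']
    · simp [phaseProduct, le_antisymm (not_lt.1 hy) (h.g_nonneg y)]
  filter_upwards [hf₁.norm_ae_eq, hf₁.eigen, hf₂.norm_ae_eq, hf₂.eigen] with x hx₁ hPx₁ hx₂ hPx₂
  by_cases hgx : 0 < g x
  · have hgx' : (g x : ℂ) ≠ 0 := by exact_mod_cast hgx.ne'
    have hq : ∀ᵐ y ∂κ x, phaseProduct g f₁ f₂ y
        = (ω₁ * (f₁ x / g x)) * (ω₂ * (f₂ x / g x)) * g y := by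
      filter_upwards [h.ae_kernel_eq_mul_g hω₁ hf₁ hgx hx₁ hPx₁,
        h.ae_kernel_eq_mul_g hω₂ hf₂ hgx hx₂ hPx₂] with y hy₁ hy₂
      by_cases hgy : 0 < g y
      · have hgy' : (g y : ℂ) ≠ 0 := by exact_mod_cast hgy.ne'
        rw [phaseProduct, if_pos hgy, hy₁, hy₂]
        field_simp
      · simp [phaseProduct, le_antisymm (not_lt.1 hgy) (h.g_nonneg y)]
    rw [h.PC_eq_of_ae_eq_mul_g hq, phaseProduct, if_pos hgx]
    field_simp
  · have hq : ∀ᵐ y ∂κ x, phaseProduct g f₁ f₂ y = 0 * g y := by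
      filter_upwards [h.ae_kernel_g_eq_zero hgx] with y hy
      simp [phaseProduct, hy]
    rw [h.PC_eq_of_ae_eq_mul_g hq, phaseProduct, if_neg hgx]
    ring

theorem HypHA.perSpec_mul (h : HypHA μ κ φ T lam g) {ω₁ ω₂ : ℂ}
    (h₁ : PerSpec μ κ φ lam (lam * ω₁)) (h₂ : PerSpec μ κ φ lam (lam * ω₂)) :
    PerSpec μ κ φ lam (lam * (ω₁ * ω₂)) := by
  have hω₁ := h.norm_eq_one_of_perSpec h₁
  have hω₂ := h.norm_eq_one_of_perSpec h₂
  obtain ⟨f₁, hf₁⟩ := h.exists_isNormalizedEigenfunction h₁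
  obtain ⟨f₂, hf₂⟩ := h.exists_isNormalizedEigenfunction h₂
  exact h.perSpec_of_isNormalizedEigenfunction (by rw [norm_mul, hω₁, hω₂, one_mul])
    (h.isNormalizedEigenfunction_phaseProduct hω₁ hω₂ hf₁ hf₂)

theorem HypHA.PR_indicator_phaseSet (h : HypHA μ κ φ T lam g) {ω : ℂ} (hω : ‖ω‖ = 1)
    {f : X → ℂ} (hf : IsNormalizedEigenfunction μ κ φ lam g ω f) (c : ℂ) :
    PR φ κ ((phaseSet g f (ω * c)).indicator g) =ᵐ[μ]
      fun x => lam * (phaseSet g f c).indicator g x := by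
  have hω0 : ω ≠ 0 := norm_ne_zero_iff.1 (hω ▸ one_ne_zero)
  filter_upwards [hf.norm_ae_eq, hf.eigen] with x hfx hPx
  by_cases hgx : 0 < g x
  swap
  · rw [Set.indicator_of_notMem (fun hx => hgx hx.1), h.PR_eq_of_ae_eq_mul_g (c := 0) ?_, zero_mul,
      mul_zero]
    filter_upwards [h.ae_kernel_g_eq_zero hgx] with y hy
    rw [zero_mul, Set.indicator_of_notMem fun hy' => hy'.1.ne' hy]
  have hgx' : (g x : ℂ) ≠ 0 := by exact_mod_cast hgx.ne'
  have hrig := h.ae_kernel_eq_mul_g hω hf hgx hfx hPx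
  by_cases hx : x ∈ phaseSet g f c
  · have hc : f x / g x = c := by rw [hx.2, mul_div_cancel_right₀ _ hgx']
    rw [Set.indicator_of_mem hx, h.PR_eq_of_ae_eq_mul_g (c := 1) ?_, one_mul]
    filter_upwards [hrig] with y hy
    by_cases hgy : 0 < g y
    · rw [Set.indicator_of_mem (show y ∈ phaseSet g f (ω * c) from ⟨hgy, by rw [hy, hc]⟩),
        one_mul]
    · rw [Set.indicator_of_notMem fun hy' => hgy hy'.1, one_mul,
        le_antisymm (not_lt.1 hgy) (h.g_nonneg y)]
  · rw [Set.indicator_of_notMem hx, h.PR_eq_of_ae_eq_mul_g (c := 0) ?_, zero_mul, mul_zero]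
    filter_upwards [hrig] with y hy
    rw [zero_mul, Set.indicator_of_notMem]
    rintro ⟨hgy, hy'⟩
    refine hx ⟨hgx, ?_⟩
    have hgy' : (g y : ℂ) ≠ 0 := by exact_mod_cast hgy.ne'
    rw [hy] at hy'
    rw [← mul_left_cancel₀ hω0 (mul_right_cancel₀ hgy' hy'), div_mul_cancel₀ _ hgx']

theorem HypHA.integral_indicator_phaseSet_mul (h : HypHA μ κ φ T lam g) {ω : ℂ}
    (hω : ‖ω‖ = 1) {f : X → ℂ} (hf : IsNormalizedEigenfunction μ κ φ lam g ω f) (c : ℂ) :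
    ∫ x, (phaseSet g f (ω * c)).indicator g x ∂μ = ∫ x, (phaseSet g f c).indicator g x ∂μ := by
  have hP := h.Pstar _ (h.bddMeas_indicator_g
    (measurableSet_phaseSet hf.measurable h.g_cont.measurable (ω * c)))
  rw [integral_congr_ae (h.PR_indicator_phaseSet hω hf c), integral_const_mul] at hP
  exact (mul_left_cancel₀ h.lam_pos.ne' hP).symm

theorem HypHA.integral_indicator_phaseSet_pow_mul (h : HypHA μ κ φ T lam g) {ω : ℂ}
    (hω : ‖ω‖ = 1) {f : X → ℂ} (hf : IsNormalizedEigenfunction μ κ φ lam g ω f) (c : ℂ)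
    (n : ℕ) :
    ∫ x, (phaseSet g f (ω ^ n * c)).indicator g x ∂μ
      = ∫ x, (phaseSet g f c).indicator g x ∂μ := by
  induction n with
  | zero => rw [pow_zero, one_mul]
  | succ n ih => rw [pow_succ', mul_assoc, h.integral_indicator_phaseSet_mul hω hf, ih]

theorem HypHA.sum_integral_indicator_phaseSet_le (h : HypHA μ κ φ T lam g) {f : X → ℂ}
    (hf : Measurable f) (s : Finset ℂ) :
    ∑ c ∈ s, ∫ x, (phaseSet g f c).indicator g x ∂μ ≤ ∫ x, g x ∂μ := by
  have := h.setup.prob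
  have hmeas c := measurableSet_phaseSet hf h.g_cont.measurable c
  rw [← integral_finsetSum s fun c _ => (h.bddMeas_indicator_g (hmeas c)).integrable,
    ← Finset.indicator_biUnion s _ fun c _ c' _ hcc' => phaseSet_disjoint hcc',
    integral_indicator (Finset.measurableSet_biUnion s fun c _ => hmeas c)]
  exact setIntegral_le_integral h.bddMeas_g.integrable (ae_of_all _ h.g_nonneg)

/-- The phase sets `{f = ωⁿ c g}`, `n < N`, are disjoint and all carry the same mass. -/
theorem HypHA.natCast_mul_integral_indicator_phaseSet_le (h : HypHA μ κ φ T lam g) {ω : ℂ}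
    (hω : ‖ω‖ = 1) {f : X → ℂ} (hf : IsNormalizedEigenfunction μ κ φ lam g ω f) {c : ℂ}
    (hc : c ≠ 0) {N : ℕ} (hinj : Set.InjOn (ω ^ ·) (Finset.range N)) :
    N * ∫ x, (phaseSet g f c).indicator g x ∂μ ≤ ∫ x, g x ∂μ := by
  have hinj' : Set.InjOn (fun n => ω ^ n * c) (Finset.range N) :=
    fun a ha b hb hab => hinj ha hb (mul_right_cancel₀ hc hab)
  calc (N : ℝ) * ∫ x, (phaseSet g f c).indicator g x ∂μ
      = ∑ n ∈ Finset.range N, ∫ x, (phaseSet g f (ω ^ n * c)).indicator g x ∂μ := by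
        simp [h.integral_indicator_phaseSet_pow_mul hω hf]
    _ = ∑ c' ∈ (Finset.range N).image (fun n => ω ^ n * c),
          ∫ x, (phaseSet g f c').indicator g x ∂μ :=
        by rw [Finset.sum_image hinj']
    _ ≤ ∫ x, g x ∂μ := h.sum_integral_indicator_phaseSet_le hf.measurable _

theorem HypHA.integral_indicator_pos (h : HypHA μ κ φ T lam g) {D : Set X}
    (hD : MeasurableSet D) {x : X} (hgx : 0 < g x) (hker : ∀ᵐ y ∂κ x, 0 < g y → y ∈ D) :
    0 < ∫ y, D.indicator g y ∂μ := by
  have := h.setup.prob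
  have hnonneg : 0 ≤ D.indicator g := Set.indicator_nonneg fun y _ => h.g_nonneg y
  refine (integral_nonneg hnonneg).lt_of_ne' fun h0 => ?_
  have hD0 := (integral_eq_zero_iff_of_nonneg hnonneg (h.bddMeas_indicator_g hD).integrable).1 h0
  have hg0 : g =ᵐ[κ x] 0 := by
    filter_upwards [hker, h.setup.ae_kernel hD0 x] with y hy hy0
    rcases (h.g_nonneg y).eq_or_lt with hgy | hgy
    · exact hgy.symm
    · rwa [Set.indicator_of_mem (hy hgy)] at hy0
  have hpos := h.integral_kernel_g_pos hgx
  rw [integral_congr_ae hg0, Pi.zero_def, integral_zero] at hpos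
  exact hpos.false

/-- Otherwise there are phases `ωᵢ` of order exceeding `i`; at a point `x₀` where all their
eigenfunctions are rigid, every phase set `{fᵢ = ωᵢ cᵢ g}` contains the `κ x₀`-full set `D`,
so `i ∫_D g ≤ ∫ g` for all `i`, contradicting `∫_D g > 0`. -/
theorem HypHA.exists_pow_eq_one (h : HypHA μ κ φ T lam g) :
    ∃ B, 0 < B ∧ ∀ ω, PerSpec μ κ φ lam (lam * ω) → ω ^ B = 1 := by
  by_contra! hcon
  choose ω hω hpow using fun i : ℕ => hcon i.factorial i.factorial_pos
  have hnorm i := h.norm_eq_one_of_perSpec (hω i)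
  choose f hf using fun i => h.exists_isNormalizedEigenfunction (hω i)
  obtain ⟨x₀, hgx₀, hx₀⟩ := h.exists_pos_of_ae
    (ae_all_iff.2 fun i => (hf i).norm_ae_eq.and (hf i).eigen)
  set c : ℕ → ℂ := fun i => ω i * (f i x₀ / g x₀)
  set D := ⋂ i, phaseSet g (f i) (c i)
  have hD : MeasurableSet D :=
    .iInter fun i => measurableSet_phaseSet (hf i).measurable h.g_cont.measurable _
  have hδ : 0 < ∫ y, D.indicator g y ∂μ := by
    refine h.integral_indicator_pos hD hgx₀ ?_
    filter_upwards [ae_all_iff.2 fun i =>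
      h.ae_kernel_eq_mul_g (hnorm i) (hf i) hgx₀ (hx₀ i).1 (hx₀ i).2] with y hy hgy
    exact Set.mem_iInter.2 fun i => ⟨hgy, hy i⟩
  obtain ⟨N, hN⟩ := exists_nat_gt ((∫ y, g y ∂μ) / ∫ y, D.indicator g y ∂μ)
  have hω0 : ω N ≠ 0 := norm_ne_zero_iff.1 ((hnorm N).symm ▸ one_ne_zero)
  have hc : c N ≠ 0 := by
    have hfx₀ : f N x₀ ≠ 0 := norm_ne_zero_iff.1 ((hx₀ N).1.symm ▸ hgx₀.ne')
    exact mul_ne_zero hω0 (div_ne_zero hfx₀ (Complex.ofReal_ne_zero.2 hgx₀.ne'))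
  have hmass := h.natCast_mul_integral_indicator_phaseSet_le (hnorm N) (hf N) hc
    (pow_injOn_range_of_pow_factorial_ne_one hω0 (hpow N))
  have hDle : ∫ y, D.indicator g y ∂μ ≤ ∫ y, (phaseSet g (f N) (c N)).indicator g y ∂μ := by
    have := h.setup.prob
    refine integral_mono (h.bddMeas_indicator_g hD).integrable (h.bddMeas_indicator_g
      (measurableSet_phaseSet (hf N).measurable h.g_cont.measurable _)).integrable ?_
    exact Set.indicator_le_indicator_of_subset (Set.iInter_subset _ N) fun y => h.g_nonneg y
  rw [div_lt_iff₀ hδ] at hN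
  nlinarith [mul_le_mul_of_nonneg_left hDle (Nat.cast_nonneg N : (0 : ℝ) ≤ N)]

end Compact

/-- **Lemma A.2.** Under Hypothesis (HA), there is `k ≥ 1` such that the point
peripheral spectrum of `P` is exactly `{lam e^{2πi j/k} : j = 0, …, k-1}`. -/
theorem statement3 (μ : Measure M) (κ : Kernel M M) (φ : M → ℝ)
    (T : Lp ℂ ⊤ μ →L[ℂ] Lp ℂ ⊤ μ) (lam : ℝ) (g : M → ℝ)
    (hHA : HypHA μ κ φ T lam g) :
    ∃ k : ℕ, 1 ≤ k ∧ PerSpecEq μ κ φ lam k := by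
  have hlam : (lam : ℂ) ≠ 0 := Complex.ofReal_ne_zero.2 hHA.lam_pos.ne'
  obtain ⟨B, hB, hpow⟩ := hHA.exists_pow_eq_one
  obtain ⟨k, hk, hΩ⟩ := exists_forall_mem_iff_pow_eq_one (Ω := {ω | PerSpec μ κ φ lam (lam * ω)})
    hB (by simpa using hHA.perSpec_lam) (fun _ ha _ hb => hHA.perSpec_mul ha hb) hpow
  refine ⟨k, hk, fun α => ?_⟩
  have hα : PerSpec μ κ φ lam α ↔ α / lam ∈ {ω | PerSpec μ κ φ lam (lam * ω)} := by
    show _ ↔ PerSpec μ κ φ lam (lam * (α / lam))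
    rw [mul_div_cancel₀ α hlam]
  rw [hα, hΩ, pow_eq_one_iff_exists_eq_rootU hk.ne']
  simp_rw [div_eq_iff hlam, mul_comm]

end

end QEM
end

section
/- Assume Hypothesis (HA). Then P maps C(M) into C(M), and the sequence of operators {λ^{-n} P^n : C(M) → C(M)}_{n∈ℕ} is bounded, i.e. sup_{n∈ℕ} ‖λ^{-n} P^n‖_{C(M)→C(M)} < ∞ (the operator λ^{-1}P is power-bounded on C(M) with the supremum norm). -/
/-!
Strong Feller makes `x ↦ κ(x, A)` continuous for every Borel set `A`. Together with `κ(x, ·) ≪ μ`,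
Borel–Cantelli and Dini's theorem on the compact space `M` upgrade this to uniform absolute
continuity: `μ(A) ≤ r` forces `κ(x, A) ≤ ε` for all `x`.

Since `P*μ = λμ`, the continuous functions `h_n = P^n 1 ≥ 0` satisfy `∫ h_n dμ = λ^n`, so by
Markov's inequality `{h_n ≥ λ^n / r}` has `μ`-measure at most `r`. Splitting `∫ h_n dκ(x, ·)`
along this set gives `‖h_{n+1}‖ ≤ (λ/2) ‖h_n‖ + c λ^n` for `ε = λ / (2 sup e^φ)`, hence
`‖h_n‖ = O(λ^n)`; finally `|P^n f| ≤ ‖f‖ h_n` by positivity of `P`.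
-/

open MeasureTheory ProbabilityTheory Filter Topology

namespace QEM

noncomputable section

variable {M : Type*} [MetricSpace M] [CompactSpace M] [MeasurableSpace M] [BorelSpace M]

theorem exists_pos_forall_measureReal_le_of_continuous {X Y : Type*} [TopologicalSpace X]
    [CompactSpace X] [MeasurableSpace Y] {μ : Measure Y} [IsFiniteMeasure μ] {ν : X → Measure Y}
    [∀ x, IsFiniteMeasure (ν x)] (hac : ∀ x, ν x ≪ μ)
    (hcont : ∀ s, MeasurableSet s → Continuous fun x => (ν x).real s) {ε : ℝ} (hε : 0 < ε) :
    ∃ r > 0, ∀ x s, MeasurableSet s → μ.real s ≤ r → (ν x).real s ≤ ε := by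
  by_contra! hbad
  choose x s hs hμs hνs using fun k : ℕ => hbad ((1 / 2) ^ k) (by positivity)
  set B : ℕ → Set Y := fun m => ⋃ i, ⋃ (_ : i ≥ m), s i
  have hB_meas : ∀ m, MeasurableSet (B m) := fun m =>
    MeasurableSet.iUnion fun i => MeasurableSet.iUnion fun _ => hs i
  have hB_anti : Antitone B := fun m n hmn =>
    Set.iUnion₂_mono' fun i hi => ⟨i, hmn.trans hi, le_rfl⟩
  have hsum : ∑' k, μ (s k) ≠ ⊤ := by
    have hgeom : ∑' k : ℕ, ENNReal.ofReal (1 / 2) ^ k ≠ ⊤ :=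
      (tsum_geometric_lt_top.2 (ENNReal.ofReal_lt_one.2 (by norm_num))).ne
    refine ne_top_of_le_ne_top hgeom (ENNReal.tsum_le_tsum fun k => ?_)
    rw [← ENNReal.ofReal_pow (by norm_num)]
    exact (ENNReal.le_ofReal_iff_toReal_le (measure_ne_top _ _) (by positivity)).2 (hμs k)
  have hnull : μ (⋂ m, B m) = 0 := by
    simpa [B, limsup_eq_iInf_iSup_of_nat, Set.iSup_eq_iUnion, Set.iInf_eq_iInter]
      using measure_limsup_atTop_eq_zero hsum
  have hlim : ∀ y, Tendsto (fun m => (ν y).real (B m)) atTop (𝓝 0) := by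
    intro y
    have h := tendsto_measure_iInter_atTop (μ := ν y) (fun m => (hB_meas m).nullMeasurableSet)
      hB_anti ⟨0, measure_ne_top _ _⟩
    rw [hac y hnull] at h
    exact (ENNReal.tendsto_toReal ENNReal.zero_ne_top).comp h
  have hunif := Antitone.tendstoUniformly_of_forall_tendsto (fun m => hcont _ (hB_meas m))
    (fun m n hmn y => measureReal_mono (hB_anti hmn) (measure_ne_top _ _)) continuous_const hlim
  obtain ⟨m, hm⟩ := (Metric.tendstoUniformly_iff.1 hunif ε hε).exists
  have hsB : (ν (x m)).real (s m) ≤ (ν (x m)).real (B m) :=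
    measureReal_mono (Set.subset_iUnion₂ (s := fun i (_ : i ≥ m) => s i) m le_rfl)
      (measure_ne_top _ _)
  have hBε : (ν (x m)).real (B m) < ε := by
    simpa [Real.dist_eq, abs_of_nonneg measureReal_nonneg] using hm (x m)
  linarith [hνs m]

theorem integral_le_mul_measureReal_setOf_le_add {Y : Type*} [MeasurableSpace Y] {ν : Measure Y}
    (hν : ν Set.univ ≤ 1) {u : Y → ℝ} (hu : Measurable u) (hu0 : ∀ y, 0 ≤ u y) {S t : ℝ}
    (huS : ∀ y, u y ≤ S) (ht : 0 ≤ t) :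
    ∫ y, u y ∂ν ≤ S * ν.real {y | t ≤ u y} + t := by
  have : IsFiniteMeasure ν := ⟨hν.trans_lt ENNReal.one_lt_top⟩
  set A := {y | t ≤ u y}
  have hA : MeasurableSet A := measurableSet_le measurable_const hu
  have hpt : ∀ y, u y ≤ A.indicator (fun _ => S) y + t := by
    intro y
    by_cases hy : y ∈ A
    · rw [Set.indicator_of_mem hy]
      linarith [huS y]
    · rw [Set.indicator_of_notMem hy, zero_add]
      exact (not_le.1 hy).le
  have hSA : Integrable (A.indicator fun _ => S) ν := (integrable_const S).indicator hA
  calc ∫ y, u y ∂ν ≤ ∫ y, (A.indicator (fun _ => S) y + t) ∂ν :=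
        integral_mono_of_nonneg (ae_of_all _ hu0) (hSA.add (integrable_const t))
          (ae_of_all _ hpt)
    _ = S * ν.real A + t * ν.real Set.univ := by
        rw [integral_add hSA (integrable_const t), integral_indicator_const S hA, integral_const,
          smul_eq_mul, smul_eq_mul, mul_comm t, mul_comm S]
    _ ≤ S * ν.real A + t := by
        have : ν.real Set.univ ≤ 1 := ENNReal.toReal_le_of_le_ofReal zero_le_one (by simpa)
        nlinarith

theorem le_mul_pow_of_le_half_mul_add {lam b : ℝ} (hlam : 0 < lam) {S : ℕ → ℝ}
    (h : ∀ n, S (n + 1) ≤ lam / 2 * S n + b * lam ^ n) (n : ℕ) :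
    S n ≤ max (S 0) (2 * b / lam) * lam ^ n := by
  set C := max (S 0) (2 * b / lam)
  have hb : b ≤ lam / 2 * C := by
    have := le_max_right (S 0) (2 * b / lam)
    rw [div_le_iff₀ hlam] at this
    linarith
  induction n with
  | zero => simp [C]
  | succ n ih =>
    calc S (n + 1) ≤ lam / 2 * S n + b * lam ^ n := h n
      _ ≤ lam / 2 * (C * lam ^ n) + lam / 2 * C * lam ^ n := by gcongr
      _ = C * lam ^ (n + 1) := by ring

theorem abs_le_iSup_abs {X : Type*} [TopologicalSpace X] [CompactSpace X] {f : X → ℝ}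
    (hf : Continuous f) (x : X) : |f x| ≤ ⨆ y, |f y| :=
  le_ciSup (isCompact_range hf.abs).bddAbove x

theorem bddMeas_of_continuous {X : Type*} [TopologicalSpace X] [CompactSpace X]
    [MeasurableSpace X] [OpensMeasurableSpace X] {f : X → ℝ} (hf : Continuous f) : BddMeas f :=
  ⟨hf.measurable, ⨆ y, |f y|, abs_le_iSup_abs hf⟩

section Koopman

variable {X : Type*} [MeasurableSpace X] {μ : Measure X} {κ : Kernel X X} {φ : X → ℝ}

theorem PR_nonneg {f : X → ℝ} (hf : ∀ y, 0 ≤ f y) (x : X) : 0 ≤ PR φ κ f x :=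
  mul_nonneg (Real.exp_pos _).le (integral_nonneg hf)

theorem PR_const_mul (c : ℝ) (f : X → ℝ) :
    PR φ κ (fun y => c * f y) = fun x => c * PR φ κ f x := by
  ext x
  simp only [PR, integral_const_mul]
  ring

theorem abs_PR_le {u v : X → ℝ} (x : X) (hv : Integrable v (κ x)) (huv : ∀ y, |u y| ≤ v y) :
    |PR φ κ u x| ≤ PR φ κ v x := by
  rw [PR, PR, abs_mul, abs_of_pos (Real.exp_pos _)]
  have h := norm_integral_le_of_norm_le (f := u) hv (ae_of_all _ huv)
  rw [Real.norm_eq_abs] at h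
  exact mul_le_mul_of_nonneg_left h (Real.exp_pos _).le

theorem continuous_integral_of_strongFeller [TopologicalSpace X] (hφ : Continuous φ)
    (hSF : ∀ f, BddMeas f → Continuous (PR φ κ f)) {f : X → ℝ} (hf : BddMeas f) :
    Continuous fun x => ∫ y, f y ∂κ x := by
  have h : (fun x => ∫ y, f y ∂κ x) = fun x => Real.exp (-φ x) * PR φ κ f x := by
    ext x
    rw [PR, ← mul_assoc, ← Real.exp_add, neg_add_cancel, Real.exp_zero, one_mul]
  rw [h]
  exact (Real.continuous_exp.comp hφ.neg).mul (hSF f hf)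

theorem continuous_measureReal_of_strongFeller [TopologicalSpace X] (hφ : Continuous φ)
    (hSF : ∀ f, BddMeas f → Continuous (PR φ κ f)) {s : Set X} (hs : MeasurableSet s) :
    Continuous fun x => (κ x).real s := by
  have hbdd : BddMeas (s.indicator 1) :=
    ⟨measurable_one.indicator hs, 1, fun x => by
      by_cases hx : x ∈ s <;> simp [hx]⟩
  simpa [integral_indicator_one hs] using continuous_integral_of_strongFeller hφ hSF hbdd

theorem continuous_iterate_PR [TopologicalSpace X]
    (hPC : ∀ f, Continuous f → Continuous (PR φ κ f)) {f : X → ℝ} (hf : Continuous f) (n : ℕ) :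
    Continuous ((PR φ κ)^[n] f) := by
  induction n with
  | zero => exact hf
  | succ n ih => rw [Function.iterate_succ']; exact hPC _ ih

theorem iterate_PR_one_nonneg (n : ℕ) (x : X) : 0 ≤ (PR φ κ)^[n] 1 x := by
  induction n generalizing x with
  | zero => exact zero_le_one
  | succ n ih => rw [Function.iterate_succ_apply']; exact PR_nonneg ih x

theorem abs_iterate_PR_le [TopologicalSpace X] [CompactSpace X] [OpensMeasurableSpace X]
    [IsFiniteKernel κ] (hPC : ∀ f, Continuous f → Continuous (PR φ κ f))
    {f : X → ℝ} (hf : Continuous f) (n : ℕ) (x : X) :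
    |(PR φ κ)^[n] f x| ≤ (⨆ y, |f y|) * (PR φ κ)^[n] 1 x := by
  induction n generalizing x with
  | zero => simpa using abs_le_iSup_abs hf x
  | succ n ih =>
    have hint : Integrable (fun y => (⨆ y, |f y|) * (PR φ κ)^[n] 1 y) (κ x) :=
      ((continuous_iterate_PR hPC continuous_one n).const_mul _).integrable_of_hasCompactSupport
        (HasCompactSupport.of_compactSpace _)
    rw [Function.iterate_succ_apply', Function.iterate_succ_apply',
      ← congrFun (PR_const_mul _ _) x]
    exact abs_PR_le x hint ih

theorem integral_iterate_PR_one [TopologicalSpace X] [CompactSpace X] [OpensMeasurableSpace X]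
    [IsProbabilityMeasure μ]
    (hPC : ∀ f, Continuous f → Continuous (PR φ κ f)) {lam : ℝ}
    (hstar : ∀ f, BddMeas f → ∫ x, PR φ κ f x ∂μ = lam * ∫ x, f x ∂μ) (n : ℕ) :
    ∫ x, (PR φ κ)^[n] 1 x ∂μ = lam ^ n := by
  induction n with
  | zero => simp
  | succ n ih =>
    rw [Function.iterate_succ_apply',
      hstar _ (bddMeas_of_continuous (continuous_iterate_PR hPC continuous_one n)), ih, pow_succ,
      mul_comm]

theorem PR_le_of_integral_le [TopologicalSpace X] [CompactSpace X] [OpensMeasurableSpace X]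
    [IsFiniteMeasure μ] (hsub : ∀ x, κ x Set.univ ≤ 1) {Φ : ℝ} (hΦ : ∀ x, φ x ≤ Φ) {r ε : ℝ}
    (hr : ∀ x s, MeasurableSet s → μ.real s ≤ r → (κ x).real s ≤ ε) {u : X → ℝ}
    (hu : Continuous u) (hu0 : ∀ y, 0 ≤ u y) {S t : ℝ} (huS : ∀ y, u y ≤ S) (ht : 0 < t)
    (hint : ∫ y, u y ∂μ ≤ t * r) (x : X) :
    PR φ κ u x ≤ Real.exp Φ * (S * ε + t) := by
  have hμ : μ.real {y | t ≤ u y} ≤ r := by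
    have hmarkov := mul_meas_ge_le_integral_of_nonneg (ae_of_all _ hu0)
      (hu.integrable_of_hasCompactSupport (μ := μ) (HasCompactSupport.of_compactSpace _)) t
    exact le_of_mul_le_mul_left (hmarkov.trans hint) ht
  have hκ := hr x _ (measurableSet_le measurable_const hu.measurable) hμ
  have hS : 0 ≤ S := (hu0 x).trans (huS x)
  calc PR φ κ u x = Real.exp (φ x) * ∫ y, u y ∂κ x := rfl
    _ ≤ Real.exp Φ * (S * (κ x).real {y | t ≤ u y} + t) :=
        mul_le_mul (Real.exp_le_exp.2 (hΦ x))
          (integral_le_mul_measureReal_setOf_le_add (hsub x) hu.measurable hu0 huS ht.le)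
          (integral_nonneg hu0) (Real.exp_pos _).le
    _ ≤ Real.exp Φ * (S * ε + t) := by gcongr

theorem exists_iterate_PR_one_le_mul_pow [TopologicalSpace X] [CompactSpace X]
    [OpensMeasurableSpace X] [IsProbabilityMeasure μ] (hφ : Continuous φ)
    (hsub : ∀ x, κ x Set.univ ≤ 1) (hac : ∀ x, κ x ≪ μ)
    (hSF : ∀ f, BddMeas f → Continuous (PR φ κ f)) {lam : ℝ} (hlam : 0 < lam)
    (hstar : ∀ f, BddMeas f → ∫ x, PR φ κ f x ∂μ = lam * ∫ x, f x ∂μ) :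
    ∃ C, ∀ n x, (PR φ κ)^[n] 1 x ≤ C * lam ^ n := by
  have : IsFiniteKernel κ := ⟨⟨1, ENNReal.one_lt_top, hsub⟩⟩
  have hPC : ∀ f, Continuous f → Continuous (PR φ κ f) := fun f hf =>
    hSF f (bddMeas_of_continuous hf)
  have hcont := continuous_iterate_PR hPC continuous_one
  have hbdd : ∀ n, BddAbove (Set.range ((PR φ κ)^[n] 1)) := fun n =>
    (isCompact_range (hcont n)).bddAbove
  obtain ⟨Φ, hΦ⟩ := (isCompact_range hφ).bddAbove
  obtain ⟨r, hr, hκ⟩ := exists_pos_forall_measureReal_le_of_continuous hac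
    (fun s hs => continuous_measureReal_of_strongFeller hφ hSF hs)
    (ε := lam / (2 * Real.exp Φ)) (by positivity)
  set S : ℕ → ℝ := fun n => ⨆ x, (PR φ κ)^[n] 1 x
  have hrec : ∀ n, S (n + 1) ≤ lam / 2 * S n + Real.exp Φ / r * lam ^ n := by
    intro n
    have hSn : 0 ≤ S n := Real.iSup_nonneg (iterate_PR_one_nonneg n)
    refine Real.iSup_le (fun x => ?_) (by positivity)
    calc (PR φ κ)^[n + 1] 1 x = PR φ κ ((PR φ κ)^[n] 1) x := by
          rw [Function.iterate_succ_apply']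
      _ ≤ Real.exp Φ * (S n * (lam / (2 * Real.exp Φ)) + lam ^ n / r) :=
          PR_le_of_integral_le hsub (fun x => hΦ ⟨x, rfl⟩) hκ (hcont n) (iterate_PR_one_nonneg n)
            (le_ciSup (hbdd n)) (by positivity)
            (by rw [integral_iterate_PR_one hPC hstar, div_mul_cancel₀ _ hr.ne']) x
      _ = lam / 2 * S n + Real.exp Φ / r * lam ^ n := by
          field_simp
  exact ⟨_, fun n x => (le_ciSup (hbdd n) x).trans (le_mul_pow_of_le_half_mul_add hlam hrec n)⟩

end Koopman

/-- **Lemma A.4.** Under Hypothesis (HA), `P` maps `C(M)` into `C(M)` and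
`lam⁻¹ P` is power-bounded on `C(M)` with the supremum norm: there is `C` with
`‖P^n f‖_∞ ≤ C lam^n ‖f‖_∞` for all `n` and all continuous `f`. -/
theorem statement4 (μ : Measure M) (κ : Kernel M M) (φ : M → ℝ)
    (T : Lp ℂ ⊤ μ →L[ℂ] Lp ℂ ⊤ μ) (lam : ℝ) (g : M → ℝ)
    (hHA : HypHA μ κ φ T lam g) :
    (∀ f : M → ℝ, Continuous f → Continuous (PR φ κ f)) ∧
    ∃ C : ℝ, ∀ (n : ℕ) (f : M → ℝ), Continuous f → ∀ x : M,
      |(PR φ κ)^[n] f x| ≤ C * lam ^ n * ⨆ y, |f y| := by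
  have hset := hHA.setup
  have := hset.prob
  have : IsFiniteKernel κ := ⟨⟨1, ENNReal.one_lt_top, hset.subMarkov⟩⟩
  have hPC : ∀ f : M → ℝ, Continuous f → Continuous (PR φ κ f) := fun f hf =>
    hHA.strongFeller f (bddMeas_of_continuous hf)
  obtain ⟨C, hC⟩ := exists_iterate_PR_one_le_mul_pow hset.contφ hset.subMarkov hset.ac
    hHA.strongFeller hHA.lam_pos hHA.Pstar
  refine ⟨hPC, C, fun n f hf x => ?_⟩
  calc |(PR φ κ)^[n] f x| ≤ (⨆ y, |f y|) * (PR φ κ)^[n] 1 x := abs_iterate_PR_le hPC hf n x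
    _ ≤ (⨆ y, |f y|) * (C * lam ^ n) :=
        mul_le_mul_of_nonneg_left (hC n x) (Real.iSup_nonneg fun y => abs_nonneg _)
    _ = C * lam ^ n * ⨆ y, |f y| := mul_comm _ _

end

end QEM
end

section
/- Assume Hypothesis (HA), let k ≥ 1 be a natural number such that σ_per(P) = {λ e^{2πi j/k} : j = 0, 1, …, k−1}, and let g_0, …, g_{k−1} be as in the cyclic family hypothesis. For each ℓ ∈ {0,…,k−1} define f_ℓ := (1/k) Σ_{j=0}^{k−1} e^{2πi jℓ/k} g_j. Then P f_ℓ = λ e^{2πi ℓ/k} f_ℓ, and ker(P − λ e^{2πi ℓ/k}) = span_ℂ{f_ℓ} in L^∞(M,μ;ℂ). -/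
/-!
Since `P g_i = λ g_{i-1}`, on the span of the `g_i` the operator `P` acts as `λ` times the cyclic
shift of coefficients `(c_i) ↦ (c_{i+1})`, whose eigenvector for `ω = e^{2πiℓ/k}` is `c_i = ω^i`;
this gives `P f_ℓ = λ ω f_ℓ`. Conversely, because `ω^k = 1` an eigenfunction for `λ ω` lies in
`ker (P^k - λ^k)`, hence in the span of the `g_i`. The `g_i` have disjoint supports and are not
a.e. zero, so the coefficients are determined a.e.; they satisfy `c_{i+1} = ω c_i`, which makes
the eigenfunction a multiple of `f_ℓ`.
-/

open MeasureTheory ProbabilityTheory Filter Topology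

namespace QEM

noncomputable section

variable {M : Type*} [MetricSpace M] [CompactSpace M] [MeasurableSpace M] [BorelSpace M]

lemma rootU_mul (k j ℓ : ℕ) : rootU k (j * ℓ) = rootU k ℓ ^ j := by
  unfold rootU
  rw [← Complex.exp_nat_mul]
  congr 1
  push_cast
  ring

lemma rootU_pow_self {k : ℕ} (hk : k ≠ 0) (ℓ : ℕ) : rootU k ℓ ^ k = 1 := by
  rw [← rootU_mul, rootU, ← Complex.exp_nat_mul_two_pi_mul_I ℓ]
  congr 1
  field_simp
  push_cast
  ring

section CyclicIndex

variable {G : Type*} [Monoid G] {k : ℕ} [NeZero k] {ω : G}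

lemma pow_val_add_one_of_pow_eq_one (hω : ω ^ k = 1) (i : Fin k) :
    ω ^ ((i + 1 : Fin k) : ℕ) = ω * ω ^ (i : ℕ) := by
  rw [Fin.val_add, Fin.val_one', ← pow_eq_pow_mod _ hω, pow_add, ← pow_eq_pow_mod _ hω, pow_one,
    ← pow_succ, pow_succ']

open Fin.NatCast in
lemma eq_pow_val_mul_of_forall_add_one {c : Fin k → G} (h : ∀ i, c (i + 1) = ω * c i)
    (i : Fin k) : c i = ω ^ (i : ℕ) * c 0 := by
  suffices ∀ n : ℕ, c n = ω ^ n * c 0 by simpa using this i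
  intro n
  induction n with
  | zero => simp
  | succ n ih => rw [Nat.cast_succ, h, ih, pow_succ', mul_assoc]

end CyclicIndex

omit [MetricSpace M] [CompactSpace M] [BorelSpace M] in
lemma eq_zero_of_sum_mul_ofReal_ae_eq_zero {μ : Measure M} {ι : Type*} [Fintype ι] {f : ι → M → ℝ}
    (hdisj : ∀ i j, i ≠ j → ∀ x, f i x ≠ 0 → f j x = 0) (hf : ∀ i, ¬ f i =ᵐ[μ] 0)
    {d : ι → ℂ} (h : (fun x => ∑ i, d i * (f i x : ℂ)) =ᵐ[μ] 0) : d = 0 := by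
  classical
  funext j
  by_contra hdj
  refine hf j ?_
  filter_upwards [h] with x hx
  by_contra hfx
  rw [Finset.sum_eq_single j (fun i _ hij => by simp [hdisj j i (Ne.symm hij) x hfx])
    (by simp)] at hx
  exact mul_ne_zero hdj (Complex.ofReal_ne_zero.mpr hfx) hx

section KoopmanOperator

variable {μ : Measure M} {κ : Kernel M M} {φ : M → ℝ}

omit [MetricSpace M] [CompactSpace M] [BorelSpace M] in
lemma PC_congr_ae (hac : ∀ x, κ x ≪ μ) {f f' : M → ℂ} (h : f =ᵐ[μ] f') :
    PC φ κ f = PC φ κ f' := by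
  funext x
  unfold PC
  rw [integral_congr_ae (h.filter_mono (hac x).ae_le)]

omit [MetricSpace M] [CompactSpace M] [BorelSpace M] in
lemma PC_const_mul (c : ℂ) (f : M → ℂ) :
    PC φ κ (fun x => c * f x) = fun x => c * PC φ κ f x := by
  funext x
  unfold PC
  rw [integral_const_mul]
  ring

omit [MetricSpace M] [CompactSpace M] [BorelSpace M] in
lemma PC_iterate_ae_eq_pow_mul (hac : ∀ x, κ x ≪ μ) {f : M → ℂ} {α : ℂ}
    (hf : PC φ κ f =ᵐ[μ] fun x => α * f x) (n : ℕ) :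
    (PC φ κ)^[n] f =ᵐ[μ] fun x => α ^ n * f x := by
  induction n with
  | zero => simp
  | succ n ih =>
    rw [Function.iterate_succ_apply', PC_congr_ae hac ih, PC_const_mul]
    filter_upwards [hf] with x hx
    rw [hx, pow_succ]
    ring

omit [MetricSpace M] [CompactSpace M] [BorelSpace M] in
lemma PC_sum_mul_ofReal {ι : Type*} [Fintype ι] {f : ι → M → ℝ}
    (hf : ∀ i x, Integrable (f i) (κ x)) (c : ι → ℂ) :
    PC φ κ (fun x => ∑ i, c i * (f i x : ℂ)) = fun x => ∑ i, c i * (PR φ κ (f i) x : ℂ) := by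
  funext x
  simp only [PC, PR]
  rw [integral_finsetSum (f := fun i y => c i * (f i y : ℂ)) Finset.univ
    fun i _ => (hf i x).ofReal.const_mul (c i), Finset.mul_sum]
  refine Finset.sum_congr rfl fun i _ => ?_
  rw [integral_const_mul, integral_complex_ofReal]
  push_cast
  ring

end KoopmanOperator

omit [CompactSpace M] [BorelSpace M] in
lemma HypHA.toReal_measure_pos {μ : Measure M} {κ : Kernel M M} {φ : M → ℝ}
    {T : Lp ℂ ⊤ μ →L[ℂ] Lp ℂ ⊤ μ} {lam : ℝ} {g : M → ℝ} (hHA : HypHA μ κ φ T lam g) :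
    0 < (μ {x | 0 < g x}).toReal := by
  have := hHA.setup.prob
  obtain ⟨x, hx⟩ := Function.ne_iff.mp hHA.g_ne
  refine ENNReal.toReal_pos (hHA.setup.fullSupp _ (isOpen_lt continuous_const hHA.g_cont)
    ⟨x, (hHA.g_nonneg x).lt_of_ne' hx⟩).ne' (measure_ne_top μ _)

namespace CyclicFamily

variable {μ : Measure M} {κ : Kernel M M} {φ : M → ℝ} {lam : ℝ} {g : M → ℝ} {k : ℕ} [NeZero k]
  {gi : Fin k → M → ℝ}

omit [CompactSpace M] [BorelSpace M] in
lemma not_ae_eq_zero (hgi : CyclicFamily μ κ φ lam g k gi) {T : Lp ℂ ⊤ μ →L[ℂ] Lp ℂ ⊤ μ}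
    (hHA : HypHA μ κ φ T lam g) (i : Fin k) : ¬ gi i =ᵐ[μ] 0 := fun h => by
  have := hgi.integral i
  rw [integral_congr_ae h] at this
  simp only [Pi.zero_apply, integral_zero] at this
  exact hHA.toReal_measure_pos.ne this

lemma PC_sum_mul [IsFiniteKernel κ] (hgi : CyclicFamily μ κ φ lam g k gi) (c : Fin k → ℂ) :
    PC φ κ (fun x => ∑ i, c i * (gi i x : ℂ)) =
      fun x => (lam : ℂ) * ∑ i, c (i + 1) * (gi i x : ℂ) := by
  have hint : ∀ i x, Integrable (gi i) (κ x) := fun i x =>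
    (hgi.cont i).integrable_of_hasCompactSupport (HasCompactSupport.of_compactSpace _)
  rw [PC_sum_mul_ofReal hint]
  funext x
  rw [Finset.mul_sum,
    ← Equiv.sum_comp (Equiv.addRight (1 : Fin k)) fun i => c i * (PR φ κ (gi i) x : ℂ)]
  refine Finset.sum_congr rfl fun i _ => ?_
  simp only [Equiv.coe_addRight, hgi.cycle, add_sub_cancel_right]
  push_cast
  ring

lemma add_one_eq_mul_of_PC_ae [IsFiniteKernel κ] (hgi : CyclicFamily μ κ φ lam g k gi)
    (hlam : lam ≠ 0) (hnz : ∀ i, ¬ gi i =ᵐ[μ] 0) {c : Fin k → ℂ} {ω : ℂ}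
    (h : PC φ κ (fun x => ∑ i, c i * (gi i x : ℂ)) =ᵐ[μ]
      fun x => ((lam : ℂ) * ω) * ∑ i, c i * (gi i x : ℂ)) (i : Fin k) :
    c (i + 1) = ω * c i := by
  have hdisj : ∀ i j, i ≠ j → ∀ x, gi i x ≠ 0 → gi j x = 0 := fun i j hij x hi =>
    le_antisymm (not_lt.mp fun hj => hgi.disj i j hij x
      ⟨(hgi.nonneg i x).lt_of_ne' hi, hj⟩) (hgi.nonneg j x)
  have hcomb : (fun x => ∑ i, ((lam : ℂ) * (c (i + 1) - ω * c i)) * (gi i x : ℂ)) =ᵐ[μ] 0 := by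
    filter_upwards [h] with x hx
    rw [hgi.PC_sum_mul] at hx
    calc ∑ i, (lam : ℂ) * (c (i + 1) - ω * c i) * (gi i x : ℂ)
        = (lam : ℂ) * ∑ i, c (i + 1) * (gi i x : ℂ)
          - ((lam : ℂ) * ω) * ∑ i, c i * (gi i x : ℂ) := by
          simp only [Finset.mul_sum, ← Finset.sum_sub_distrib]
          exact Finset.sum_congr rfl fun _ _ => by ring
      _ = 0 := sub_eq_zero.mpr hx
  simpa [sub_eq_zero, hlam] using congrFun (eq_zero_of_sum_mul_ofReal_ae_eq_zero hdisj hnz hcomb) i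

lemma PC_sum_rootU_mul [IsFiniteKernel κ] (hgi : CyclicFamily μ κ φ lam g k gi) (ℓ : ℕ) :
    PC φ κ (fun x => ∑ j : Fin k, rootU k ((j : ℕ) * ℓ) * (gi j x : ℂ)) =
      fun x => ((lam : ℂ) * rootU k ℓ) * ∑ j : Fin k, rootU k ((j : ℕ) * ℓ) * (gi j x : ℂ) := by
  rw [hgi.PC_sum_mul]
  funext x
  simp only [Finset.mul_sum, rootU_mul,
    pow_val_add_one_of_pow_eq_one (rootU_pow_self (NeZero.ne k) ℓ)]
  exact Finset.sum_congr rfl fun _ _ => by ring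

lemma exists_ae_eq_mul_sum_rootU_of_PC_ae [IsFiniteKernel κ]
    (hgi : CyclicFamily μ κ φ lam g k gi) (hac : ∀ x, κ x ≪ μ) (hlam : lam ≠ 0)
    (hnz : ∀ i, ¬ gi i =ᵐ[μ] 0) (ℓ : ℕ) {f : M → ℂ}
    (h : PC φ κ f =ᵐ[μ] fun x => ((lam : ℂ) * rootU k ℓ) * f x) :
    ∃ c : ℂ, f =ᵐ[μ] fun x => c * ∑ j : Fin k, rootU k ((j : ℕ) * ℓ) * (gi j x : ℂ) := by
  obtain ⟨c, hc⟩ := (hgi.span_ker f).mp fun _ => by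
    filter_upwards [PC_iterate_ae_eq_pow_mul hac h k] with x hx
    rw [hx, mul_pow, rootU_pow_self (NeZero.ne k), mul_one]
  have hshift := hgi.add_one_eq_mul_of_PC_ae hlam hnz (c := c) (ω := rootU k ℓ) <| by
    rw [← PC_congr_ae hac hc]
    filter_upwards [h, hc] with x hx hcx
    rw [hx, hcx]
  refine ⟨c 0, hc.trans (Eventually.of_forall fun x => ?_)⟩
  simp only [Finset.mul_sum, rootU_mul]
  exact Finset.sum_congr rfl fun j _ => by rw [eq_pow_val_mul_of_forall_add_one hshift j]; ring

end CyclicFamily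

theorem statement8_general (μ : Measure M) (κ : Kernel M M) (φ : M → ℝ)
    (T : Lp ℂ ⊤ μ →L[ℂ] Lp ℂ ⊤ μ) (lam : ℝ) (g : M → ℝ)
    (hHA : HypHA μ κ φ T lam g)
    (k : ℕ) [NeZero k]
    (gi : Fin k → M → ℝ) (hgi : CyclicFamily μ κ φ lam g k gi) (ℓ : Fin k) :
    (PC φ κ (fun x => (1 / (k : ℂ)) * ∑ j : Fin k, rootU k ((j : ℕ) * (ℓ : ℕ)) * (gi j x : ℂ))
        = fun x => ((lam : ℂ) * rootU k (ℓ : ℕ)) *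
            ((1 / (k : ℂ)) * ∑ j : Fin k, rootU k ((j : ℕ) * (ℓ : ℕ)) * (gi j x : ℂ))) ∧
    (∀ f : M → ℂ, BddMeasC f →
      ((PC φ κ f =ᵐ[μ] fun x => ((lam : ℂ) * rootU k (ℓ : ℕ)) * f x) ↔
        ∃ c : ℂ, f =ᵐ[μ] fun x =>
          c * ((1 / (k : ℂ)) * ∑ j : Fin k, rootU k ((j : ℕ) * (ℓ : ℕ)) * (gi j x : ℂ)))) := by
  have : IsFiniteKernel κ := ⟨⟨1, ENNReal.one_lt_top, hHA.setup.subMarkov⟩⟩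
  have hac := hHA.setup.ac
  have hk : (k : ℂ) ≠ 0 := Nat.cast_ne_zero.mpr (NeZero.ne k)
  have hf_ℓ : PC φ κ (fun x => (1 / (k : ℂ)) * ∑ j : Fin k, rootU k (j * ℓ) * (gi j x : ℂ)) =
      fun x => ((lam : ℂ) * rootU k ℓ) *
        ((1 / (k : ℂ)) * ∑ j : Fin k, rootU k (j * ℓ) * (gi j x : ℂ)) := by
    rw [PC_const_mul, hgi.PC_sum_rootU_mul]
    funext x
    ring
  refine ⟨hf_ℓ, fun f _ => ⟨fun h => ?_, fun ⟨c, hc⟩ => ?_⟩⟩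
  · obtain ⟨c, hc⟩ := hgi.exists_ae_eq_mul_sum_rootU_of_PC_ae hac hHA.lam_pos.ne'
      (hgi.not_ae_eq_zero hHA) ℓ h
    refine ⟨k * c, hc.trans (Eventually.of_forall fun x => ?_)⟩
    field_simp
  · rw [PC_congr_ae hac hc, PC_const_mul, hf_ℓ]
    filter_upwards [hc] with x hx
    rw [hx]
    ring

/-- **Corollary A.7.** Under Hypothesis (HA), the cyclic-family hypothesis and
`σ_per(P) = {lam e^{2πi j/k}}_{j<k}`, the functions `f_ℓ = (1/k) ∑_j e^{2πi jℓ/k} g_j` satisfy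
`P f_ℓ = lam e^{2πi ℓ/k} f_ℓ` and span the corresponding eigenspaces in `L^∞(M,μ;ℂ)`. -/
theorem statement8 (μ : Measure M) (κ : Kernel M M) (φ : M → ℝ)
    (T : Lp ℂ ⊤ μ →L[ℂ] Lp ℂ ⊤ μ) (lam : ℝ) (g : M → ℝ)
    (hHA : HypHA μ κ φ T lam g)
    (k : ℕ) [NeZero k] (hk : PerSpecEq μ κ φ lam k)
    (gi : Fin k → M → ℝ) (hgi : CyclicFamily μ κ φ lam g k gi) (ℓ : Fin k) :
    (PC φ κ (fun x => (1 / (k : ℂ)) * ∑ j : Fin k, rootU k ((j : ℕ) * (ℓ : ℕ)) * (gi j x : ℂ))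
        = fun x => ((lam : ℂ) * rootU k (ℓ : ℕ)) *
            ((1 / (k : ℂ)) * ∑ j : Fin k, rootU k ((j : ℕ) * (ℓ : ℕ)) * (gi j x : ℂ))) ∧
    (∀ f : M → ℂ, BddMeasC f →
      ((PC φ κ f =ᵐ[μ] fun x => ((lam : ℂ) * rootU k (ℓ : ℕ)) * f x) ↔
        ∃ c : ℂ, f =ᵐ[μ] fun x =>
          c * ((1 / (k : ℂ)) * ∑ j : Fin k, rootU k ((j : ℕ) * (ℓ : ℕ)) * (gi j x : ℂ)))) :=
  statement8_general μ κ φ T lam g hHA k gi hgi ℓ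

end

end QEM
end

section
/- Assume Hypothesis (HA), the cyclic family hypothesis, and the spectral decomposition hypothesis. For every i ∈ {0,…,k−1} define μ̃_i(A) := μ̃(A ∩ C_i). Then P_g^* μ̃_i = λ μ̃_{i+1 (mod k)}; that is, ∫_M P_g f dμ̃_i = λ ∫_M f dμ̃_{i+1 (mod k)} for every bounded measurable f : M → ℝ. -/
open MeasureTheory ProbabilityTheory Filter Topology

namespace QEM

noncomputable section

variable {M : Type*} [MetricSpace M] [CompactSpace M] [MeasurableSpace M] [BorelSpace M]

/-- **Lemma A.12.** Under Hypothesis (HA), the cyclic family and spectral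
decomposition hypotheses, the measures `μ̃_i := μ̃(· ∩ C_i)` satisfy `P_g^* μ̃_i = lam μ̃_{i+1}`. -/
theorem statement11 (μ : Measure M) (κ : Kernel M M) (φ : M → ℝ)
    (T : Lp ℂ ⊤ μ →L[ℂ] Lp ℂ ⊤ μ) (lam : ℝ) (g : M → ℝ)
    (hHA : HypHA μ κ φ T lam g)
    (k : ℕ) [NeZero k] (hk : PerSpecEq μ κ φ lam k)
    (gi : Fin k → M → ℝ) (hgi : CyclicFamily μ κ φ lam g k gi)
    (V : Submodule ℂ (M → ℂ)) (hV : SpecDecomp μ κ φ lam g k gi V) :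
    ∀ i : Fin k, ∀ f : M → ℝ, BddMeas f →
      ∫ x, Pg φ κ g f x ∂((mtilde μ g).restrict {x | 0 < gi i x}) =
        lam * ∫ x, f x ∂((mtilde μ g).restrict {x | 0 < gi (i + 1) x}) := by
  intro i f hf
  classical
  -- basic notation
  have hfin : ∀ x : M, IsFiniteMeasure (κ x) :=
    fun x => ⟨lt_of_le_of_lt (hHA.setup.subMarkov x) ENNReal.one_lt_top⟩
  have hmC : ∀ j : Fin k, MeasurableSet {x | 0 < gi j x} :=
    fun j => (isOpen_lt continuous_const (hgi.cont j)).measurableSet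
  have hzero : ∀ (j : Fin k) (x : M), ¬ 0 < gi j x → gi j x = 0 :=
    fun j x hx => le_antisymm (not_lt.mp hx) (hgi.nonneg j x)
  -- key: if gi j x = 0 then κ x gives no mass to C_{j+1}
  have hker : ∀ (x : M) (j : Fin k), gi j x = 0 → κ x {y | 0 < gi (j + 1) y} = 0 := by
    intro x j hj
    haveI := hfin x
    have hcyc := congrFun (hgi.cycle (j + 1)) x
    rw [add_sub_cancel_right] at hcyc
    have hint : ∫ y, gi (j + 1) y ∂(κ x) = 0 := by
      simp only [PR, hj, mul_zero] at hcyc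
      rcases mul_eq_zero.mp hcyc with h | h
      · exact absurd h (Real.exp_ne_zero _)
      · exact h
    have hInt : Integrable (gi (j + 1)) (κ x) := by
      obtain ⟨C, hC⟩ := (isCompact_range (hgi.cont (j + 1)).norm).bddAbove
      refine Integrable.mono' (integrable_const C)
        ((hgi.cont (j + 1)).measurable.aestronglyMeasurable) ?_
      filter_upwards with y
      exact hC ⟨y, rfl⟩
    have h0 : gi (j + 1) =ᵐ[κ x] 0 :=
      (integral_eq_zero_iff_of_nonneg (fun y => hgi.nonneg (j + 1) y) hInt).mp hint
    have h0' : κ x {y | gi (j + 1) y ≠ 0} = 0 := by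
      simpa [Filter.EventuallyEq, ae_iff] using h0
    exact measure_mono_null (fun y hy => ne_of_gt hy) h0'
  -- pointwise identity
  have hpoint : Set.indicator {x | 0 < gi i x} (Pg φ κ g f)
      = PR φ κ (Set.indicator {x | 0 < gi (i + 1) x} f) := by
    funext x
    by_cases hx : 0 < gi i x
    · rw [Set.indicator_of_mem (show x ∈ {x | 0 < gi i x} from hx)]
      simp only [Pg, PR]
      congr 1
      refine integral_congr_ae ?_
      have hae : ∀ᵐ y ∂(κ x), ∀ j : Fin k, j ≠ i + 1 → gi j y = 0 := by
        rw [ae_all_iff]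
        intro j
        by_cases hj : j = i + 1
        · filter_upwards with y hy; exact absurd hj hy
        · have hji : gi (j - 1) x = 0 := by
            apply hzero
            intro hpos
            have hne : i ≠ j - 1 := fun h => hj (by rw [h, sub_add_cancel])
            exact hgi.disj i (j - 1) hne x ⟨hx, hpos⟩
          have := hker x (j - 1) hji
          rw [sub_add_cancel] at this
          filter_upwards [measure_eq_zero_iff_ae_notMem.mp this] with y hy _
          exact hzero j y hy
      filter_upwards [hae] with y hy
      by_cases hyc : 0 < gi (i + 1) y
      · rw [Set.indicator_of_mem (show y ∈ {y | 0 < g y} from hgi.supported (i + 1) y hyc),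
          Set.indicator_of_mem (show y ∈ {y | 0 < gi (i + 1) y} from hyc)]
      · rw [Set.indicator_of_notMem (show y ∉ {y | 0 < gi (i + 1) y} from hyc)]
        have hgy : g y = 0 := by
          rw [hgi.avg]
          have hall : ∀ j : Fin k, gi j y = 0 := fun j => by
            by_cases hj : j = i + 1
            · exact hj ▸ hzero (i + 1) y hyc
            · exact hy j hj
          simp [hall]
        rw [Set.indicator_of_notMem (show y ∉ {y | 0 < g y} by simp [Set.mem_setOf_eq, hgy])]
    · rw [Set.indicator_of_notMem (show x ∉ {x | 0 < gi i x} from hx)]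
      have hk0 := hker x i (hzero i x hx)
      simp only [PR]
      have h0 : Set.indicator {y | 0 < gi (i + 1) y} f =ᵐ[κ x] (fun _ => (0 : ℝ)) := by
        filter_upwards [measure_eq_zero_iff_ae_notMem.mp hk0] with y hy
        simp only [Set.indicator_apply, Set.mem_setOf_eq, if_neg hy]
      rw [integral_congr_ae h0, integral_const, smul_zero, mul_zero]
  -- measure algebra
  have hsub : ∀ j : Fin k, {x | 0 < gi j x} ⊆ {x | 0 < g x} :=
    fun j x hx => hgi.supported j x hx
  have hrestr : ∀ j : Fin k, (mtilde μ g).restrict {x | 0 < gi j x}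
      = (μ {x | 0 < g x})⁻¹ • μ.restrict {x | 0 < gi j x} := by
    intro j
    rw [mtilde, Measure.restrict_smul, Measure.restrict_restrict (hmC j),
      Set.inter_eq_self_of_subset_left (hsub j)]
  have hbdd : BddMeas (Set.indicator {x | 0 < gi (i + 1) x} f) := by
    obtain ⟨hfm, C, hC⟩ := hf
    refine ⟨hfm.indicator (hmC (i + 1)), |C|, fun x => ?_⟩
    by_cases hx : x ∈ {x | 0 < gi (i + 1) x}
    · rw [Set.indicator_of_mem hx]; exact (hC x).trans (le_abs_self C)
    · rw [Set.indicator_of_notMem hx]; simp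
  rw [hrestr i, hrestr (i + 1), integral_smul_measure, integral_smul_measure,
    ← integral_indicator (hmC i), hpoint, hHA.Pstar _ hbdd, integral_indicator (hmC (i + 1))]
  rw [smul_eq_mul, smul_eq_mul]
  ring


end

end QEM
end
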